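/- arXiv:1503.06237 — 11 statements merged into one kernel-verified Lean document; each statement's English description precedes it below -/
import Mathlib

section
/- Let T be a linear map from a finite-dimensional Hilbert space H_A to a finite-dimensional Hilbert space H_B with the property that for every unitary U on H_A there exists a unitary U' on H_B with T∘U = U'∘T. Then T†T is a scalar multiple of the identity on H_A, i.e., T is proportional to an isometry. -/
open Matrix

/-- If `T : H_A → H_B` intertwines every unitary on `H_A` with
some unitary on `H_B` (`T ∘ U = U' ∘ T`), then `Tᴴ * T` is a scalar multiple
of the identity, i.e. `T` is proportional to an isometry. -/
theorem intertwiner_proportional_isometry {A B : Type*}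
    [Fintype A] [Fintype B] [DecidableEq A] [DecidableEq B]
    (hdim : Fintype.card A ≤ Fintype.card B)
    (T : Matrix B A ℂ)
    (h : ∀ U : Matrix A A ℂ, U ∈ Matrix.unitaryGroup A ℂ →
      ∃ U' : Matrix B B ℂ, U' ∈ Matrix.unitaryGroup B ℂ ∧ T * U = U' * T) :
    ∃ c : ℂ, Tᴴ * T = c • (1 : Matrix A A ℂ) := by
  set M : Matrix A A ℂ := Tᴴ * T with hMdef
  -- M commutes with every unitary
  have hcomm : ∀ U ∈ Matrix.unitaryGroup A ℂ, U * M = M * U := by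
    intro U hU
    obtain ⟨U', hU', hTU⟩ := h U hU
    have hUU : U * star U = 1 := (Matrix.mem_unitaryGroup_iff).mp hU
    have hU'U' : star U' * U' = 1 := (Matrix.mem_unitaryGroup_iff').mp hU'
    have h1 : Uᴴ * M * U = M := by
      calc Uᴴ * (Tᴴ * T) * U = (T * U)ᴴ * (T * U) := by
            simp only [Matrix.conjTranspose_mul, Matrix.mul_assoc]
        _ = (U' * T)ᴴ * (U' * T) := by rw [hTU]
        _ = Tᴴ * (star U' * U') * T := by
            simp only [Matrix.conjTranspose_mul, Matrix.star_eq_conjTranspose,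
              Matrix.mul_assoc]
        _ = M := by rw [hU'U']; simp [hMdef]
    calc U * M = U * (Uᴴ * M * U) := by rw [h1]
      _ = (U * star U) * M * U := by
          simp only [Matrix.star_eq_conjTranspose, Matrix.mul_assoc]
      _ = M * U := by rw [hUU, Matrix.one_mul]
  -- off-diagonal entries vanish
  have hoff : ∀ a b : A, a ≠ b → M a b = 0 := by
    intro a b hab
    set d : A → ℂ := fun x => if x = a then -1 else 1 with hd
    have hdU : Matrix.diagonal d ∈ Matrix.unitaryGroup A ℂ := by
      rw [Matrix.mem_unitaryGroup_iff, Matrix.star_eq_conjTranspose,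
        Matrix.diagonal_conjTranspose, Matrix.diagonal_mul_diagonal]
      ext i j
      by_cases hij : i = j
      · subst hij
        simp only [Matrix.diagonal_apply_eq, Matrix.one_apply_eq, hd, Pi.star_apply]
        split_ifs <;> simp
      · simp [Matrix.diagonal_apply_ne _ hij, Matrix.one_apply_ne hij]
    have hc := hcomm _ hdU
    have he : (Matrix.diagonal d * M) a b = (M * Matrix.diagonal d) a b := by rw [hc]
    rw [Matrix.diagonal_mul, Matrix.mul_diagonal] at he
    have hda : d a = -1 := by simp [hd]
    have hdb : d b = 1 := by simp [hd, (Ne.symm hab)]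
    rw [hda, hdb, mul_one] at he
    linear_combination -he / 2
  -- diagonal entries are all equal
  have hdiag : ∀ a b : A, M a a = M b b := by
    intro a b
    by_cases hab : a = b
    · rw [hab]
    · set σ : Equiv.Perm A := Equiv.swap a b with hσ
      have hperm : σ.permMatrix ℂ ∈ Matrix.unitaryGroup A ℂ := by
        rw [Matrix.mem_unitaryGroup_iff, Matrix.star_eq_conjTranspose]
        have htr : (σ.permMatrix ℂ)ᴴ = (σ.permMatrix ℂ)ᵀ := by
          ext i j
          simp only [Matrix.conjTranspose_apply, Matrix.transpose_apply,
            PEquiv.toMatrix_apply]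
          split_ifs <;> simp
        rw [htr, ← PEquiv.toMatrix_symm, ← Equiv.toPEquiv_symm,
          ← PEquiv.toMatrix_trans, ← Equiv.toPEquiv_trans]
        simp [← PEquiv.toMatrix_refl]
      have hc := hcomm _ hperm
      unfold σ at hc
      rw [PEquiv.toMatrix_toPEquiv_mul, PEquiv.mul_toMatrix_toPEquiv] at hc
      have he : M.submatrix (Equiv.swap a b) id a b
          = M.submatrix id (Equiv.swap a b).symm a b := by rw [hc]
      simpa [Equiv.swap_apply_left, Equiv.swap_apply_right] using he.symm
  -- conclude
  rcases isEmpty_or_nonempty A with hA | hA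
  · exact ⟨0, by ext i j; exact (IsEmpty.false i).elim⟩
  · obtain ⟨a₀⟩ := hA
    refine ⟨M a₀ a₀, ?_⟩
    ext i j
    by_cases hij : i = j
    · subst hij
      simp [hdiag i a₀]
    · simp [hoff i j hij, Matrix.one_apply_ne hij]
end

section
/- Suppose the 2n indices of a perfect tensor are partitioned into four disjoint nonempty sets A, B, C, D with |A|,|B|,|C|,|D| < n. Then, with entropy of a set X defined by S_X = min(|X|, 2n − |X|), the tripartite information I_3(A,B,C) = S_A + S_B + S_C − S_{AB} − S_{AC} − S_{BC} + S_{ABC} is strictly negative. -/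
/-- For a perfect tensor on `2n` indices partitioned into four
nonempty sets `A,B,C,D` of sizes `a,b,c,d < n`, with entropy
`s x = min x (2n - x)`, the tripartite information
`I₃ = s a + s b + s c - s (a+b) - s (a+c) - s (b+c) + s (a+b+c)` is strictly
negative. -/
theorem perfect_tensor_tripartite_info_neg (n a b c d : ℕ)
    (ha : 0 < a) (hb : 0 < b) (hc : 0 < c) (hd : 0 < d)
    (han : a < n) (hbn : b < n) (hcn : c < n) (hdn : d < n)
    (hsum : a + b + c + d = 2 * n) :
    (fun x : ℕ => min (x : ℤ) (2 * n - x)) a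
      + (fun x : ℕ => min (x : ℤ) (2 * n - x)) b
      + (fun x : ℕ => min (x : ℤ) (2 * n - x)) c
      - (fun x : ℕ => min (x : ℤ) (2 * n - x)) (a + b)
      - (fun x : ℕ => min (x : ℤ) (2 * n - x)) (a + c)
      - (fun x : ℕ => min (x : ℤ) (2 * n - x)) (b + c)
      + (fun x : ℕ => min (x : ℤ) (2 * n - x)) (a + b + c) < 0 := by
  simp only []
  push_cast
  omega
end

section
/- For a pure quadripartite entropy function (S_X = S_{X^c}, S_∅ = 0), the tripartite information is additive: if S = S₁ + S₂ where S₁ and S₂ are each pure quadripartite entropy functions, then I_3 computed from S equals I_3 computed from S₁ plus I_3 computed from S₂. Consequently, a product of perfect-tensor states shared among A,B,C,D has strictly negative I_3 provided at least one factor has support on all four sets (with each support size less than half that factor's total) and every other factor has a nonpositive contribution. -/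
/-- Tripartite information of three subsystems, for an entropy function `S`
on subsets of the four subsystems `{A,B,C,D} = Fin 4`. -/
noncomputable def tripartiteInfo (S : Finset (Fin 4) → ℝ) (x y z : Fin 4) : ℝ :=
  S {x} + S {y} + S {z} - S {x, y} - S {x, z} - S {y, z} + S {x, y, z}

/-- The entropy function of a perfect-tensor factor on `2n` spins, where
region `x ∈ Fin 4` holds `w x` of the spins: `S_X = min(|X|, 2n − |X|)`
(in units of `log v`). -/
noncomputable def perfectEntropy (n : ℕ) (w : Fin 4 → ℕ) (X : Finset (Fin 4)) : ℝ :=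
  min ((∑ x ∈ X, w x : ℕ) : ℝ) ((2 * n : ℝ) - ((∑ x ∈ X, w x : ℕ) : ℝ))

/-- A subset of a 3-element set cannot be all of `Fin 4`. -/
lemma not_univ_of_three {s : Finset (Fin 4)} (x y z : Fin 4)
    (hs : s ⊆ {x, y, z}) (h : s = Finset.univ) : False := by
  have h1 : (4 : ℕ) ≤ 3 := by
    calc (4 : ℕ) = (Finset.univ : Finset (Fin 4)).card := by simp
    _ = s.card := by rw [h]
    _ ≤ ({x, y, z} : Finset (Fin 4)).card := Finset.card_le_card hs
    _ ≤ ({y, z} : Finset (Fin 4)).card + 1 := Finset.card_insert_le _ _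
    _ ≤ (({z} : Finset (Fin 4)).card + 1) + 1 := by
        have := Finset.card_insert_le y ({z} : Finset (Fin 4)); omega
    _ = 3 := by simp
  omega

/-- A single perfect tensor shared among four nonempty regions, each of size
less than `n`, has strictly negative tripartite information. -/
lemma perfect_neg (n : ℕ) (w : Fin 4 → ℕ) (hw : ∀ x, 0 < w x) (hwn : ∀ x, w x < n)
    (a b c d : Fin 4) (hab : a ≠ b) (hac : a ≠ c) (hbc : b ≠ c)
    (hsum : (w a : ℝ) + w b + w c + w d = 2 * n) :
    tripartiteInfo (perfectEntropy n w) a b c < 0 := by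
  have s_ab : (∑ x ∈ ({a, b} : Finset (Fin 4)), w x) = w a + w b := Finset.sum_pair hab
  have s_ac : (∑ x ∈ ({a, c} : Finset (Fin 4)), w x) = w a + w c := Finset.sum_pair hac
  have s_bc : (∑ x ∈ ({b, c} : Finset (Fin 4)), w x) = w b + w c := Finset.sum_pair hbc
  have s_abc : (∑ x ∈ ({a, b, c} : Finset (Fin 4)), w x) = w a + (w b + w c) := by
    rw [show ({a, b, c} : Finset (Fin 4)) = insert a {b, c} from rfl,
      Finset.sum_insert (by simp [hab, hac]), Finset.sum_pair hbc]
  have ha' : (0:ℝ) < w a := by exact_mod_cast hw a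
  have hb' : (0:ℝ) < w b := by exact_mod_cast hw b
  have hc' : (0:ℝ) < w c := by exact_mod_cast hw c
  have hd' : (0:ℝ) < w d := by exact_mod_cast hw d
  have hna' : (w a:ℝ) < n := by exact_mod_cast hwn a
  have hnb' : (w b:ℝ) < n := by exact_mod_cast hwn b
  have hnc' : (w c:ℝ) < n := by exact_mod_cast hwn c
  have hnd' : (w d:ℝ) < n := by exact_mod_cast hwn d
  simp only [tripartiteInfo, perfectEntropy, s_ab, s_ac, s_bc, s_abc,
    Finset.sum_singleton]
  push_cast
  have ea : min ((w a:ℝ)) (2*(n:ℝ) - (w a:ℝ)) = (w a:ℝ) := min_eq_left (by linarith)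
  have eb : min ((w b:ℝ)) (2*(n:ℝ) - (w b:ℝ)) = (w b:ℝ) := min_eq_left (by linarith)
  have ec : min ((w c:ℝ)) (2*(n:ℝ) - (w c:ℝ)) = (w c:ℝ) := min_eq_left (by linarith)
  have et : min ((w a:ℝ) + ((w b:ℝ) + (w c:ℝ))) (2*(n:ℝ) - ((w a:ℝ) + ((w b:ℝ) + (w c:ℝ))))
      = (w d:ℝ) := by rw [min_eq_right (by linarith)]; linarith
  rw [ea, eb, ec, et]
  rcases min_cases ((w a:ℝ) + w b) ((2*(n:ℝ)) - ((w a:ℝ) + w b)) with ⟨h1, h1'⟩ | ⟨h1, h1'⟩ <;>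
  rcases min_cases ((w a:ℝ) + w c) ((2*(n:ℝ)) - ((w a:ℝ) + w c)) with ⟨h2, h2'⟩ | ⟨h2, h2'⟩ <;>
  rcases min_cases ((w b:ℝ) + w c) ((2*(n:ℝ)) - ((w b:ℝ) + w c)) with ⟨h3, h3'⟩ | ⟨h3, h3'⟩ <;>
  rw [h1, h2, h3] <;> linarith

/-- Tripartite information is additive over a sum of pure
quadripartite entropy functions, and consequently a product of perfect-tensor
states shared among `A,B,C,D` has strictly negative `I₃` provided at least one
factor is a perfect tensor supported on all four regions with each support
size less than half that factor's total, and every other factor contributes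
nonpositively. -/
theorem tripartiteInfo_additive_and_product_negative
    {ι : Type*} [Fintype ι] (Sfam : ι → Finset (Fin 4) → ℝ)
    (hpure : ∀ i (X : Finset (Fin 4)), Sfam i X = Sfam i Xᶜ)
    (a b c d : Fin 4) (h4 : ({a, b, c, d} : Finset (Fin 4)) = Finset.univ)
    (i₀ : ι) (n : ℕ) (w : Fin 4 → ℕ)
    (hw : ∀ x, 0 < w x) (hwn : ∀ x, w x < n) (hwsum : ∑ x, w x = 2 * n)
    (hi₀ : Sfam i₀ = perfectEntropy n w)
    (hothers : ∀ i, i ≠ i₀ → tripartiteInfo (Sfam i) a b c ≤ 0) :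
    (∀ S₁ S₂ : Finset (Fin 4) → ℝ,
        (∀ X : Finset (Fin 4), S₁ X = S₁ Xᶜ) → (∀ X : Finset (Fin 4), S₂ X = S₂ Xᶜ) →
        tripartiteInfo (fun X => S₁ X + S₂ X) a b c =
          tripartiteInfo S₁ a b c + tripartiteInfo S₂ a b c) ∧
      tripartiteInfo (fun X => ∑ i, Sfam i X) a b c < 0 := by
  constructor
  · intro S₁ S₂ _ _
    simp only [tripartiteInfo]
    ring
  · classical
    have hab : a ≠ b := by
      rintro rfl; exact not_univ_of_three a c d (by intro e he; simp at he ⊢; tauto) h4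
    have hac : a ≠ c := by
      rintro rfl; exact not_univ_of_three a b d (by intro e he; simp at he ⊢; tauto) h4
    have had : a ≠ d := by
      rintro rfl; exact not_univ_of_three a b c (by intro e he; simp at he ⊢; tauto) h4
    have hbc : b ≠ c := by
      rintro rfl; exact not_univ_of_three a b d (by intro e he; simp at he ⊢; tauto) h4
    have hbd : b ≠ d := by
      rintro rfl; exact not_univ_of_three a b c (by intro e he; simp at he ⊢; tauto) h4
    have hcd : c ≠ d := by
      rintro rfl; exact not_univ_of_three a b c (by intro e he; simp at he ⊢; tauto) h4
    have hsum : w a + w b + w c + w d = 2 * n := by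
      have h0 : ∑ x ∈ ({a, b, c, d} : Finset (Fin 4)), w x = 2 * n := by
        rw [h4]; exact hwsum
      rw [show ({a, b, c, d} : Finset (Fin 4)) = insert a (insert b {c, d}) from rfl,
        Finset.sum_insert (by simp [hab, hac, had]),
        Finset.sum_insert (by simp [hbc, hbd]), Finset.sum_pair hcd] at h0
      omega
    have hsumR : (w a : ℝ) + w b + w c + w d = 2 * n := by exact_mod_cast hsum
    have key := perfect_neg n w hw hwn a b c d hab hac hbc hsumR
    have htri : tripartiteInfo (fun X => ∑ i, Sfam i X) a b c
        = ∑ i, tripartiteInfo (Sfam i) a b c := by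
      simp only [tripartiteInfo, ← Finset.sum_add_distrib, ← Finset.sum_sub_distrib]
    rw [htri, ← Finset.add_sum_erase Finset.univ _ (Finset.mem_univ i₀)]
    have h1 : tripartiteInfo (Sfam i₀) a b c < 0 := by rw [hi₀]; exact key
    have h2 : ∑ i ∈ Finset.univ.erase i₀, tripartiteInfo (Sfam i) a b c ≤ 0 :=
      Finset.sum_nonpos fun i hi => hothers i (Finset.ne_of_mem_erase hi)
    linarith
end

section
/- With f_n, g_n defined by (f_1,g_1) = (5,0) and (f_{n+1},g_{n+1}) = (2f_n+g_n, f_n+g_n), set N_bulk(n) = 1 + Σ_{k=1}^n (f_k + g_k) and N_boundary(n) = 4f_n + 3g_n. Then the ratio N_bulk(n)/N_boundary(n) converges to 1/√5 as n → ∞. -/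
open Filter Topology Real goldenRatio

/-!
The row vectors `(φ, 1)` and `(ψ, 1)` are left eigenvectors of `[[2,1],[1,1]]` for the
eigenvalues `φ²` and `ψ²`, so `P n = φ f n + g n` grows geometrically while
`Q n = ψ f n + g n` decays to `0`. Since `f (k+1) - f k = f k + g k`, the bulk count telescopes
to `f (n+1) - 4`, and after multiplying numerator and denominator by `√5 = φ - ψ` the rate is
`(φ² P n - ψ² Q n - 4√5) / ((4 - 3ψ) P n + (3φ - 4) Q n)`, whose limit is
`φ² / (4 - 3ψ) = 1 / √5`.
-/

lemma sum_Icc_one_eq_sub_of_succ_eq_add {M : Type*} [AddCommGroup M] {f u : ℕ → M}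
    (h : ∀ n, 1 ≤ n → f (n + 1) = f n + u n) (n : ℕ) :
    ∑ k ∈ Finset.Icc 1 n, u k = f (n + 1) - f 1 := by
  induction n with
  | zero => simp
  | succ n ih =>
    rw [Finset.sum_Icc_succ_top (by omega), ih, h (n + 1) (by omega)]
    abel

lemma eq_mul_pow_of_succ_eq_mul {M : Type*} [CommMonoid M] {u : ℕ → M} {c : M}
    (h : ∀ n, 1 ≤ n → u (n + 1) = c * u n) (m : ℕ) :
    u (m + 1) = u 1 * c ^ m := by
  induction m with
  | zero => simp
  | succ m ih => rw [h (m + 1) (by omega), ih, pow_succ']; exact mul_left_comm ..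

lemma mul_add_step_eq_sq_mul {R : Type*} [CommRing R] {x : R} (hx : x ^ 2 = x + 1) (a b : R) :
    x * (2 * a + b) + (a + b) = x ^ 2 * (x * a + b) := by
  linear_combination (-(x + 1) * a - b) * hx

lemma tendsto_mul_add_div_mul_add {α : Type*} {l : Filter α} {P R S : α → ℝ} {a b r s : ℝ}
    (hP : Tendsto P l atTop) (hR : Tendsto R l (𝓝 r)) (hS : Tendsto S l (𝓝 s)) (hb : b ≠ 0) :
    Tendsto (fun n => (a * P n + R n) / (b * P n + S n)) l (𝓝 (a / b)) := by
  have hlim : Tendsto (fun n => (a + R n / P n) / (b + S n / P n)) l (𝓝 ((a + 0) / (b + 0))) :=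
    ((hR.div_atTop hP).const_add a).div ((hS.div_atTop hP).const_add b) (by simpa)
  rw [add_zero, add_zero] at hlim
  refine hlim.congr' ?_
  filter_upwards [hP.eventually_ne_atTop 0] with n hn
  field_simp

lemma goldenRatio_sq_div_four_sub_three_mul_goldenConj : φ ^ 2 / (4 - 3 * ψ) = 1 / √5 := by
  have h5 : √5 ^ 2 = 5 := sq_sqrt (by norm_num)
  rw [div_eq_div_iff (by linarith [goldenConj_neg]) (by positivity)]
  linear_combination (1 / 2 + √5 / 4) * h5

section PentagonRecurrence

variable {f g : ℕ → ℝ}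
  (hrec : ∀ n, 1 ≤ n → f (n + 1) = 2 * f n + g n ∧ g (n + 1) = f n + g n)
include hrec

lemma eigencoord_step {x : ℝ} (hx : x ^ 2 = x + 1) {n : ℕ} (hn : 1 ≤ n) :
    x * f (n + 1) + g (n + 1) = x ^ 2 * (x * f n + g n) := by
  rw [(hrec n hn).1, (hrec n hn).2, mul_add_step_eq_sq_mul hx]

lemma eigencoord_succ {x : ℝ} (hx : x ^ 2 = x + 1) (m : ℕ) :
    x * f (m + 1) + g (m + 1) = (x * f 1 + g 1) * (x ^ 2) ^ m :=
  eq_mul_pow_of_succ_eq_mul (u := fun n => x * f n + g n)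
    (fun _ hn => eigencoord_step hrec hx hn) m

lemma tendsto_goldenRatio_eigencoord (h1 : 0 < φ * f 1 + g 1) :
    Tendsto (fun n => φ * f n + g n) atTop atTop := by
  rw [← tendsto_add_atTop_iff_nat 1, funext (eigencoord_succ hrec goldenRatio_sq)]
  exact (tendsto_pow_atTop_atTop_of_one_lt
    (one_lt_pow₀ one_lt_goldenRatio two_ne_zero)).const_mul_atTop h1

lemma tendsto_goldenConj_eigencoord : Tendsto (fun n => ψ * f n + g n) atTop (𝓝 0) := by
  rw [← tendsto_add_atTop_iff_nat 1, funext (eigencoord_succ hrec goldenConj_sq)]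
  have hψ : |ψ| < 1 := abs_lt.2 ⟨neg_one_lt_goldenConj, goldenConj_neg.trans one_pos⟩
  have hψ2 : |ψ ^ 2| < 1 := (abs_pow ψ 2).trans_lt (pow_lt_one₀ (abs_nonneg ψ) hψ two_ne_zero)
  simpa using (tendsto_pow_atTop_nhds_zero_of_abs_lt_one hψ2).const_mul (ψ * f 1 + g 1)

lemma bulk_div_boundary_eq_eigencoord {n : ℕ} (hn : 1 ≤ n) :
    (1 + ∑ k ∈ Finset.Icc 1 n, (f k + g k)) / (4 * f n + 3 * g n) =
      (φ ^ 2 * (φ * f n + g n) + (-ψ ^ 2 * (ψ * f n + g n) + √5 * (1 - f 1))) /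
        ((4 - 3 * ψ) * (φ * f n + g n) + (3 * φ - 4) * (ψ * f n + g n)) := by
  have hsum := sum_Icc_one_eq_sub_of_succ_eq_add
    (fun k hk => by rw [(hrec k hk).1]; ring : ∀ k, 1 ≤ k → f (k + 1) = f k + (f k + g k)) n
  have hPn := eigencoord_step hrec goldenRatio_sq hn
  have hQn := eigencoord_step hrec goldenConj_sq hn
  rw [← mul_div_mul_left _ _ (sqrt_ne_zero'.2 (by norm_num : (0 : ℝ) < 5)), hsum,
    ← goldenRatio_sub_goldenConj]
  congr 1
  · linear_combination hPn - hQn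
  · ring

end PentagonRecurrence

/-- For the pentagon holographic code with layer counts
`(f₁,g₁) = (5,0)`, `(f_{n+1}, g_{n+1}) = (2f_n + g_n, f_n + g_n)`,
`N_bulk(n) = 1 + Σ_{k=1}^n (f_k + g_k)` and `N_boundary(n) = 4f_n + 3g_n`,
the rate `N_bulk(n)/N_boundary(n)` converges to `1/√5`. -/
theorem pentagon_code_rate (f g : ℕ → ℝ)
    (hf1 : f 1 = 5) (hg1 : g 1 = 0)
    (hrec : ∀ n, 1 ≤ n → f (n + 1) = 2 * f n + g n ∧ g (n + 1) = f n + g n) :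
    Tendsto (fun n : ℕ =>
        (1 + ∑ k ∈ Finset.Icc 1 n, (f k + g k)) / (4 * f n + 3 * g n))
      atTop (nhds (1 / Real.sqrt 5)) := by
  have hP : Tendsto (fun n => φ * f n + g n) atTop atTop :=
    tendsto_goldenRatio_eigencoord hrec (by simp only [hf1, hg1, add_zero]; positivity)
  have hQ := tendsto_goldenConj_eigencoord hrec
  have hlim := tendsto_mul_add_div_mul_add (a := φ ^ 2) hP
    ((hQ.const_mul (-ψ ^ 2)).add_const (√5 * (1 - f 1))) (hQ.const_mul (3 * φ - 4))
    (by linarith [goldenConj_neg] : 4 - 3 * ψ ≠ 0)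
  rw [goldenRatio_sq_div_four_sub_three_mul_goldenConj] at hlim
  exact hlim.congr' (eventually_atTop.2 ⟨1, fun n hn =>
    (bulk_div_boundary_eq_eigencoord hrec hn).symm⟩)
end

section
/- Define (f_n, g_n) by (f_1,g_1) = (3,0) and (f_{n+1}, g_{n+1}) = (2f_n + g_n − 0, f_n + g_n − 1). Then with N_best(n) = 4f_n + 3g_n − 3 and N_boundary(n) = 4F_n + 3G_n where (F_1,G_1) = (5,0) satisfies the unmodified recursion (F_{n+1},G_{n+1}) = (2F_n+G_n, F_n+G_n), the ratio N_best(n)/N_boundary(n) converges to (3+√5)/10 as n → ∞. -/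
open Filter

/-- With `(f₁,g₁) = (3,0)`, `(f_{n+1}, g_{n+1}) = (2f_n + g_n, f_n + g_n − 1)`
(best-case tree), `N_best(n) = 4f_n + 3g_n − 3`, and `N_boundary(n) = 4F_n + 3G_n`
from the unmodified recursion with `(F₁,G₁) = (5,0)`, the ratio
`N_best(n)/N_boundary(n)` converges to `(3+√5)/10`. -/
theorem pentagon_best_case_fraction (f g F G : ℕ → ℝ)
    (hf1 : f 1 = 3) (hg1 : g 1 = 0)
    (hrec : ∀ n, 1 ≤ n → f (n + 1) = 2 * f n + g n ∧ g (n + 1) = f n + g n - 1)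
    (hF1 : F 1 = 5) (hG1 : G 1 = 0)
    (hRec : ∀ n, 1 ≤ n → F (n + 1) = 2 * F n + G n ∧ G (n + 1) = F n + G n) :
    Tendsto (fun n : ℕ => (4 * f n + 3 * g n - 3) / (4 * F n + 3 * G n))
      atTop (nhds ((3 + Real.sqrt 5) / 10)) := by
  set s := Real.sqrt 5 with hsdef
  have hs : s ^ 2 = 5 := Real.sq_sqrt (by norm_num)
  have hs0 : 0 ≤ s := Real.sqrt_nonneg 5
  have hs2 : 2 < s := by nlinarith
  have hs3 : s < 3 := by nlinarith
  have hb0 : 0 < (3 - s) / 2 := by linarith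
  have hb1 : (3 - s) / 2 < 1 := by linarith
  have hbn : ∀ n : ℕ, ((3 - s) / 2) ^ n ≠ 0 := fun n => pow_ne_zero _ (ne_of_gt hb0)
  have hab : ((3 + s) / 2) * ((3 - s) / 2) = 1 := by linear_combination -hs / 4
  have key : ∀ n, 1 ≤ n →
      f n = 1 + (1/2 + s/10) * ((3 + s)/2) ^ n + (1/2 - s/10) * ((3 - s)/2) ^ n ∧
      g n = -1 + (s/5) * ((3 + s)/2) ^ n - (s/5) * ((3 - s)/2) ^ n := by
    intro n hn
    induction n, hn using Nat.le_induction with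
    | base =>
      refine ⟨?_, ?_⟩
      · rw [hf1]; linear_combination -hs / 10
      · rw [hg1]; linear_combination -hs / 5
    | succ n hn IH =>
      obtain ⟨h1, h2⟩ := hrec n hn
      refine ⟨?_, ?_⟩
      · rw [h1, IH.1, IH.2]
        linear_combination (-(((3 + s)/2) ^ n + ((3 - s)/2) ^ n) / 20) * hs
      · rw [h2, IH.1, IH.2]
        linear_combination (-(((3 + s)/2) ^ n + ((3 - s)/2) ^ n) / 10) * hs
  have key2 : ∀ n, 1 ≤ n →
      F n = (5/2 - s/2) * ((3 + s)/2) ^ n + (5/2 + s/2) * ((3 - s)/2) ^ n ∧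
      G n = (-5/2 + 3*s/2) * ((3 + s)/2) ^ n + (-5/2 - 3*s/2) * ((3 - s)/2) ^ n := by
    intro n hn
    induction n, hn using Nat.le_induction with
    | base =>
      refine ⟨?_, ?_⟩
      · rw [hF1]; linear_combination hs / 2
      · rw [hG1]; linear_combination -3 * hs / 2
    | succ n hn IH =>
      obtain ⟨h1, h2⟩ := hRec n hn
      refine ⟨?_, ?_⟩
      · rw [h1, IH.1, IH.2]
        linear_combination ((((3 + s)/2) ^ n + ((3 - s)/2) ^ n) / 4) * hs
      · rw [h2, IH.1, IH.2]
        linear_combination (-3 * (((3 + s)/2) ^ n + ((3 - s)/2) ^ n) / 4) * hs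
  have heq : ∀ n, 1 ≤ n →
      (4 * f n + 3 * g n - 3) / (4 * F n + 3 * G n) =
      ((2 + s) + (2 - s) * ((((3 - s)/2) ^ n) ^ 2) - 2 * ((3 - s)/2) ^ n) /
      ((5/2 + 5*s/2) + (5/2 - 5*s/2) * ((((3 - s)/2) ^ n) ^ 2)) := by
    intro n hn
    obtain ⟨hf, hg⟩ := key n hn
    obtain ⟨hF, hG⟩ := key2 n hn
    have habn : ((3 + s)/2) ^ n * ((3 - s)/2) ^ n = 1 := by
      rw [← mul_pow, hab, one_pow]
    have hnum : (2 + s) + (2 - s) * ((((3 - s)/2) ^ n) ^ 2) - 2 * ((3 - s)/2) ^ n =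
        (4 * f n + 3 * g n - 3) * ((3 - s)/2) ^ n := by
      rw [hf, hg]; linear_combination -(2 + s) * habn
    have hden : (5/2 + 5*s/2) + (5/2 - 5*s/2) * ((((3 - s)/2) ^ n) ^ 2) =
        (4 * F n + 3 * G n) * ((3 - s)/2) ^ n := by
      rw [hF, hG]; linear_combination -(5/2 + 5*s/2) * habn
    rw [hnum, hden, mul_div_mul_right _ _ (hbn n)]
  have t1 : Tendsto (fun n : ℕ => ((3 - s)/2) ^ n) atTop (nhds 0) :=
    tendsto_pow_atTop_nhds_zero_of_lt_one (le_of_lt hb0) hb1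
  have t2 : Tendsto (fun n : ℕ => (((3 - s)/2) ^ n) ^ 2) atTop (nhds 0) := by
    simpa [pow_two] using t1.mul t1
  have tnum : Tendsto (fun n : ℕ =>
      (2 + s) + (2 - s) * ((((3 - s)/2) ^ n) ^ 2) - 2 * ((3 - s)/2) ^ n) atTop
      (nhds ((2 + s) + (2 - s) * 0 - 2 * 0)) :=
    ((tendsto_const_nhds.add (t2.const_mul _)).sub (t1.const_mul _))
  have tden : Tendsto (fun n : ℕ =>
      (5/2 + 5*s/2) + (5/2 - 5*s/2) * ((((3 - s)/2) ^ n) ^ 2)) atTop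
      (nhds ((5/2 + 5*s/2) + (5/2 - 5*s/2) * 0)) :=
    tendsto_const_nhds.add (t2.const_mul _)
  have hdne : (5/2 + 5*s/2) + (5/2 - 5*s/2) * (0:ℝ) ≠ 0 := by
    rw [mul_zero, add_zero]; positivity
  have tmain := tnum.div tden hdne
  have hval : ((2 + s) + (2 - s) * 0 - 2 * 0) / ((5/2 + 5*s/2) + (5/2 - 5*s/2) * (0:ℝ)) =
      (3 + s) / 10 := by
    rw [mul_zero, mul_zero, mul_zero, add_zero, add_zero, sub_zero]
    rw [div_eq_div_iff (by positivity) (by norm_num)]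
    linear_combination -5 * hs / 2
  rw [hval] at tmain
  refine tmain.congr' ?_
  filter_upwards [eventually_ge_atTop 1] with n hn
  exact (heq n hn).symm
end

section
/- Define (f_n, g_n) by (f_1,g_1) = (4,0) and (f_{n+1}, g_{n+1}) = (2f_n + g_n, f_n + g_n − 1). Then with N_worst(n) = 4f_n + 3g_n − 3 and N_boundary(n) defined from the unmodified recursion with initial data (5,0), the ratio N_worst(n)/N_boundary(n) converges to (5+√5)/10 as n → ∞. -/
open Filter

/-- With `(f₁,g₁) = (4,0)`, `(f_{n+1}, g_{n+1}) = (2f_n + g_n, f_n + g_n − 1)`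
(worst-case tree), `N_worst(n) = 4f_n + 3g_n − 3`, and `N_boundary(n) = 4F_n + 3G_n`
from the unmodified recursion with `(F₁,G₁) = (5,0)`, the ratio
`N_worst(n)/N_boundary(n)` converges to `(5+√5)/10`. -/
theorem pentagon_worst_case_fraction (f g F G : ℕ → ℝ)
    (hf1 : f 1 = 4) (hg1 : g 1 = 0)
    (hrec : ∀ n, 1 ≤ n → f (n + 1) = 2 * f n + g n ∧ g (n + 1) = f n + g n - 1)
    (hF1 : F 1 = 5) (hG1 : G 1 = 0)
    (hRec : ∀ n, 1 ≤ n → F (n + 1) = 2 * F n + G n ∧ G (n + 1) = F n + G n) :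
    Tendsto (fun n : ℕ => (4 * f n + 3 * g n - 3) / (4 * F n + 3 * G n))
      atTop (nhds ((5 + Real.sqrt 5) / 10)) := by
  have hs : Real.sqrt 5 ^ 2 = 5 := Real.sq_sqrt (by norm_num)
  set s : ℝ := Real.sqrt 5 with hsdef
  have hs0 : 0 ≤ s := Real.sqrt_nonneg 5
  have hs2 : 2 < s := by nlinarith
  have hs3 : s < 3 := by nlinarith
  set α : ℝ := (3 + s) / 2 with hα
  set β : ℝ := (3 - s) / 2 with hβ
  have hβ0 : 0 < β := by rw [hβ]; linarith
  have hβ1 : β < 1 := by rw [hβ]; linarith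
  have hα0 : 0 < α := by rw [hα]; linarith
  have hβα : β ≤ α := by rw [hα, hβ]; linarith
  have hα2 : α ^ 2 = 3 * α - 1 := by rw [hα]; linear_combination (1/4 : ℝ) * hs
  have hβ2 : β ^ 2 = 3 * β - 1 := by rw [hβ]; linear_combination (1/4 : ℝ) * hs
  have hαβ : α * β = 1 := by rw [hα, hβ]; linear_combination (-(1/4) : ℝ) * hs
  set a : ℝ := (5 + s) / 2 with ha
  set b : ℝ := (5 - s) / 2 with hb
  set c₁ : ℝ := 3 * α - 2 with hc₁
  set c₂ : ℝ := 3 * β - 2 with hc₂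
  have hbc : b * c₁ = (5 + 5 * s) / 2 := by
    rw [hb, hc₁, hα]; linear_combination (-(3/4) : ℝ) * hs
  have hac : a * c₂ = (5 - 5 * s) / 2 := by
    rw [ha, hc₂, hβ]; linear_combination (-(3/4) : ℝ) * hs
  -- closed forms
  have hfg : ∀ n, 1 ≤ n →
      f n = α ^ n + β ^ n + 1 ∧ g n = (α - 2) * α ^ n + (β - 2) * β ^ n - 1 := by
    intro n hn
    induction n, hn using Nat.le_induction with
    | base =>
      constructor
      · rw [hf1, pow_one, pow_one, hα, hβ]; ring
      · rw [hg1, pow_one, pow_one, hα, hβ]; linear_combination (-(1/2) : ℝ) * hs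
    | succ n hn ih =>
      obtain ⟨h1, h2⟩ := hrec n hn
      obtain ⟨ih1, ih2⟩ := ih
      constructor
      · rw [h1, ih1, ih2, pow_succ, pow_succ]; ring
      · rw [h2, ih1, ih2, pow_succ, pow_succ]
        linear_combination (-(1/4) * (α ^ n + β ^ n)) * hs
  have hFG : ∀ n, 1 ≤ n →
      F n = b * α ^ n + a * β ^ n ∧
        G n = b * (α - 2) * α ^ n + a * (β - 2) * β ^ n := by
    intro n hn
    induction n, hn using Nat.le_induction with
    | base =>
      constructor
      · rw [hF1, pow_one, pow_one, ha, hb, hα, hβ]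
        linear_combination (1/2 : ℝ) * hs
      · rw [hG1, pow_one, pow_one, ha, hb, hα, hβ]
        linear_combination (-(3/4) : ℝ) * hs
    | succ n hn ih =>
      obtain ⟨h1, h2⟩ := hRec n hn
      obtain ⟨ih1, ih2⟩ := ih
      constructor
      · rw [h1, ih1, ih2, pow_succ, pow_succ]; ring
      · rw [h2, ih1, ih2, pow_succ, pow_succ]
        linear_combination (-(1/4) * (b * α ^ n + a * β ^ n)) * hs
  -- the simplified ratio
  have key : ∀ n, 1 ≤ n →
      (c₁ + c₂ * (β ^ 2) ^ n - 2 * β ^ n) / (b * c₁ + a * c₂ * (β ^ 2) ^ n)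
        = (4 * f n + 3 * g n - 3) / (4 * F n + 3 * G n) := by
    intro n hn
    obtain ⟨hf, hg⟩ := hfg n hn
    obtain ⟨hF, hG⟩ := hFG n hn
    have hprod : α ^ n * β ^ n = 1 := by rw [← mul_pow, hαβ, one_pow]
    have hpow : (β ^ 2) ^ n = β ^ n * β ^ n := by
      rw [← pow_mul, two_mul, pow_add]
    have hnum : 4 * f n + 3 * g n - 3 = α ^ n * (c₁ + c₂ * (β ^ 2) ^ n - 2 * β ^ n) := by
      rw [hf, hg, hpow, hc₁, hc₂]
      linear_combination (2 - (3 * β - 2) * β ^ n) * hprod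
    have hden : 4 * F n + 3 * G n = α ^ n * (b * c₁ + a * c₂ * (β ^ 2) ^ n) := by
      rw [hF, hG, hpow, hc₁, hc₂]
      linear_combination (-(a * (3 * β - 2) * β ^ n)) * hprod
    rw [hnum, hden, mul_div_mul_left _ _ (ne_of_gt (pow_pos hα0 n))]
  -- limits
  have hβpow : Tendsto (fun n : ℕ => β ^ n) atTop (nhds 0) :=
    tendsto_pow_atTop_nhds_zero_of_lt_one hβ0.le hβ1
  have hβ2lt : β ^ 2 < 1 := by nlinarith
  have hβ2pow : Tendsto (fun n : ℕ => (β ^ 2) ^ n) atTop (nhds 0) :=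
    tendsto_pow_atTop_nhds_zero_of_lt_one (by positivity) hβ2lt
  have hbcne : b * c₁ ≠ 0 := by rw [hbc]; positivity
  have hnumT : Tendsto (fun n : ℕ => c₁ + c₂ * (β ^ 2) ^ n - 2 * β ^ n) atTop (nhds c₁) := by
    have h := ((tendsto_const_nhds :
        Tendsto (fun _ : ℕ => c₁) atTop (nhds c₁)).add
        (hβ2pow.const_mul c₂)).sub (hβpow.const_mul 2)
    simpa using h
  have hdenT : Tendsto (fun n : ℕ => b * c₁ + a * c₂ * (β ^ 2) ^ n) atTop (nhds (b * c₁)) := by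
    have h := (tendsto_const_nhds :
        Tendsto (fun _ : ℕ => b * c₁) atTop (nhds (b * c₁))).add
        (hβ2pow.const_mul (a * c₂))
    simpa using h
  have hT : Tendsto (fun n : ℕ =>
      (c₁ + c₂ * (β ^ 2) ^ n - 2 * β ^ n) / (b * c₁ + a * c₂ * (β ^ 2) ^ n))
      atTop (nhds (c₁ / (b * c₁))) := hnumT.div hdenT hbcne
  have hlim : c₁ / (b * c₁) = (5 + s) / 10 := by
    rw [div_eq_iff hbcne, hbc, hc₁, hα]
    linear_combination (-(1/4) : ℝ) * hs
  rw [← hlim]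
  refine hT.congr' ?_
  filter_upwards [eventually_ge_atTop 1] with n hn
  exact key n hn
end

section
/- The three-qutrit code with code words |0̃⟩ = (|000⟩+|111⟩+|222⟩)/√3, |1̃⟩ = (|012⟩+|120⟩+|201⟩)/√3, |2̃⟩ = (|021⟩+|102⟩+|210⟩)/√3 has the property that for every code state |ψ⟩ (any linear combination of the code words, normalized), the reduced density matrix on any single qutrit is maximally mixed (equal to I/3). -/
set_option maxHeartbeats 4000000 in
/-- For the three-qutrit code with code words
`|0̃⟩ = (|000⟩+|111⟩+|222⟩)/√3`, `|1̃⟩ = (|012⟩+|120⟩+|201⟩)/√3`,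
`|2̃⟩ = (|021⟩+|102⟩+|210⟩)/√3` (the code word `|k̃⟩` is supported on
`(a, a+k, a+2k)`), every normalized code state has maximally mixed reduced
density matrix `I/3` on each single qutrit. -/
theorem three_qutrit_code_single_qutrit_maximally_mixed
    (α : Fin 3 → ℂ) (ψ : Fin 3 × Fin 3 × Fin 3 → ℂ)
    (hψ : ψ = fun x => ∑ k : Fin 3, α k *
      (if x.2.1 = x.1 + k ∧ x.2.2 = x.1 + k + k then (1 / ((Real.sqrt 3 : ℝ) : ℂ)) else 0))
    (hnorm : ∑ x, Complex.normSq (ψ x) = 1) :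
    (Matrix.of fun a a' : Fin 3 => ∑ b : Fin 3, ∑ c : Fin 3,
        ψ (a, b, c) * star (ψ (a', b, c))) = (1 / 3 : ℂ) • (1 : Matrix (Fin 3) (Fin 3) ℂ) ∧
    (Matrix.of fun b b' : Fin 3 => ∑ a : Fin 3, ∑ c : Fin 3,
        ψ (a, b, c) * star (ψ (a, b', c))) = (1 / 3 : ℂ) • (1 : Matrix (Fin 3) (Fin 3) ℂ) ∧
    (Matrix.of fun c c' : Fin 3 => ∑ a : Fin 3, ∑ b : Fin 3,
        ψ (a, b, c) * star (ψ (a, b, c'))) = (1 / 3 : ℂ) • (1 : Matrix (Fin 3) (Fin 3) ℂ) := by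
  subst hψ
  simp only [Fintype.sum_prod_type, Fin.sum_univ_three] at hnorm
  simp (config := { decide := true }) only [if_true, if_false, Fin.isValue] at hnorm
  norm_num [Complex.normSq_mul, Complex.normSq_inv, Complex.normSq_ofReal, Real.sq_sqrt] at hnorm
  have hα : Complex.normSq (α 0) + Complex.normSq (α 1) + Complex.normSq (α 2) = 1 := by
    linarith
  have hαC : α 0 * (starRingEnd ℂ) (α 0) + α 1 * (starRingEnd ℂ) (α 1)
      + α 2 * (starRingEnd ℂ) (α 2) = 1 := by
    rw [Complex.mul_conj, Complex.mul_conj, Complex.mul_conj]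
    exact_mod_cast hα
  have ht : (((Real.sqrt 3 : ℝ) : ℂ))⁻¹ * (((Real.sqrt 3 : ℝ) : ℂ))⁻¹ = 1 / 3 := by
    rw [← mul_inv, ← Complex.ofReal_mul, Real.mul_self_sqrt (by norm_num)]
    norm_num
  refine ⟨?_, ?_, ?_⟩ <;> ext i j <;> fin_cases i <;> fin_cases j <;>
    · simp only [Matrix.of_apply, Fin.sum_univ_three, Matrix.smul_apply, Matrix.one_apply,
        Fin.isValue]
      simp (config := { decide := true }) only [if_true, if_false, Fin.isValue]
      simp only [Complex.star_def, map_mul, map_zero, mul_zero,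
        zero_mul, add_zero, zero_add, mul_one, smul_eq_mul]
      all_goals try ring
      all_goals rw [show ((starRingEnd ℂ) (((Real.sqrt 3 : ℝ) : ℂ))⁻¹) = (((Real.sqrt 3 : ℝ) : ℂ))⁻¹
        from by rw [map_inv₀, Complex.conj_ofReal]]
      all_goals linear_combination (α 0 * (starRingEnd ℂ) (α 0) + α 1 * (starRingEnd ℂ) (α 1)
          + α 2 * (starRingEnd ℂ) (α 2)) * ht + (1 / 3 : ℂ) * hαC
end

section
/- The four-qutrit state |Φ⟩ = (1/3)(|0000⟩+|1110⟩+|2220⟩+|0121⟩+|1201⟩+|2011⟩+|0212⟩+|1022⟩+|2102⟩) is absolutely maximally entangled: for every 2-element subset A of the four qutrits, the reduced density matrix ρ_A equals I/9, i.e., it is maximally mixed. -/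
lemma sum_ite_count (P : Fin 3 → Fin 3 → Prop) [∀ c d, Decidable (P c d)] (z : ℂ) :
    ∑ c : Fin 3, ∑ d : Fin 3, (if P c d then z else 0)
      = ((Finset.univ.filter fun cd : Fin 3 × Fin 3 => P cd.1 cd.2).card : ℂ) * z := by
  have : ∑ cd : Fin 3 × Fin 3, (if P cd.1 cd.2 then z else 0)
      = ∑ c : Fin 3, ∑ d : Fin 3, (if P c d then z else 0) := Fintype.sum_prod_type _
  rw [← this, ← Finset.sum_filter, Finset.sum_const, nsmul_eq_mul]

lemma entry_eq (A B : Fin 3 → Fin 3 → Prop) [∀ c d, Decidable (A c d)]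
    [∀ c d, Decidable (B c d)] {n : ℕ}
    (hcard : (Finset.univ.filter fun cd : Fin 3 × Fin 3 => A cd.1 cd.2 ∧ B cd.1 cd.2).card = n) :
    ∑ c : Fin 3, ∑ d : Fin 3,
      (if A c d then (1/3 : ℂ) else 0) * star (if B c d then (1/3 : ℂ) else 0)
      = (n : ℂ) / 9 := by
  have hs : star (1/3 : ℂ) = 1/3 := by norm_num
  simp only [apply_ite (star : ℂ → ℂ), star_zero, hs, ite_mul, zero_mul, mul_ite, mul_zero,
    ← ite_and]
  rw [sum_ite_count (fun c d => B c d ∧ A c d)]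
  have h2 : (Finset.univ.filter fun cd : Fin 3 × Fin 3 => B cd.1 cd.2 ∧ A cd.1 cd.2)
      = Finset.univ.filter fun cd : Fin 3 × Fin 3 => A cd.1 cd.2 ∧ B cd.1 cd.2 := by
    ext cd; simp [and_comm]
  rw [h2, hcard]
  ring


lemma card1 (p1 p2 q1 q2 : Fin 3) :
    (Finset.univ.filter fun cd : Fin 3 × Fin 3 =>
      (p2 = p1 + cd.2 ∧ cd.1 = p1 + cd.2 + cd.2) ∧ (q2 = q1 + cd.2 ∧ cd.1 = q1 + cd.2 + cd.2)).card
      = if (p1, p2) = (q1, q2) then 1 else 0 := by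
  revert p1 p2 q1 q2; decide

lemma card2 (p1 p2 q1 q2 : Fin 3) :
    (Finset.univ.filter fun cd : Fin 3 × Fin 3 =>
      (cd.1 = p1 + cd.2 ∧ p2 = p1 + cd.2 + cd.2) ∧ (cd.1 = q1 + cd.2 ∧ q2 = q1 + cd.2 + cd.2)).card
      = if (p1, p2) = (q1, q2) then 1 else 0 := by
  revert p1 p2 q1 q2; decide

lemma card3 (p1 p2 q1 q2 : Fin 3) :
    (Finset.univ.filter fun cd : Fin 3 × Fin 3 =>
      (cd.1 = p1 + p2 ∧ cd.2 = p1 + p2 + p2) ∧ (cd.1 = q1 + q2 ∧ cd.2 = q1 + q2 + q2)).card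
      = if (p1, p2) = (q1, q2) then 1 else 0 := by
  revert p1 p2 q1 q2; decide

lemma card4 (p1 p2 q1 q2 : Fin 3) :
    (Finset.univ.filter fun cd : Fin 3 × Fin 3 =>
      (p1 = cd.1 + cd.2 ∧ p2 = cd.1 + cd.2 + cd.2) ∧ (q1 = cd.1 + cd.2 ∧ q2 = cd.1 + cd.2 + cd.2)).card
      = if (p1, p2) = (q1, q2) then 1 else 0 := by
  revert p1 p2 q1 q2; decide

lemma card5 (p1 p2 q1 q2 : Fin 3) :
    (Finset.univ.filter fun cd : Fin 3 × Fin 3 =>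
      (p1 = cd.1 + p2 ∧ cd.2 = cd.1 + p2 + p2) ∧ (q1 = cd.1 + q2 ∧ cd.2 = cd.1 + q2 + q2)).card
      = if (p1, p2) = (q1, q2) then 1 else 0 := by
  revert p1 p2 q1 q2; decide

lemma card6 (p1 p2 q1 q2 : Fin 3) :
    (Finset.univ.filter fun cd : Fin 3 × Fin 3 =>
      (cd.2 = cd.1 + p2 ∧ p1 = cd.1 + p2 + p2) ∧ (cd.2 = cd.1 + q2 ∧ q1 = cd.1 + q2 + q2)).card
      = if (p1, p2) = (q1, q2) then 1 else 0 := by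
  revert p1 p2 q1 q2; decide



/-- The four-qutrit state
`|Φ⟩ = (1/3)(|0000⟩+|1110⟩+|2220⟩+|0121⟩+|1201⟩+|2011⟩+|0212⟩+|1022⟩+|2102⟩)`
(i.e. `Φ(a,b,c,d) = 1/3` iff `b = a + d` and `c = a + 2d`) is absolutely
maximally entangled: each of the six two-qutrit reduced density matrices
equals `I/9`. -/
theorem four_qutrit_AME
    (Φ : Fin 3 × Fin 3 × Fin 3 × Fin 3 → ℂ)
    (hΦ : Φ = fun x => if x.2.1 = x.1 + x.2.2.2 ∧ x.2.2.1 = x.1 + x.2.2.2 + x.2.2.2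
      then (1 / 3 : ℂ) else 0) :
    (Matrix.of fun p q : Fin 3 × Fin 3 => ∑ c : Fin 3, ∑ d : Fin 3,
        Φ (p.1, p.2, c, d) * star (Φ (q.1, q.2, c, d)))
      = (1 / 9 : ℂ) • (1 : Matrix (Fin 3 × Fin 3) (Fin 3 × Fin 3) ℂ) ∧
    (Matrix.of fun p q : Fin 3 × Fin 3 => ∑ b : Fin 3, ∑ d : Fin 3,
        Φ (p.1, b, p.2, d) * star (Φ (q.1, b, q.2, d)))
      = (1 / 9 : ℂ) • (1 : Matrix (Fin 3 × Fin 3) (Fin 3 × Fin 3) ℂ) ∧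
    (Matrix.of fun p q : Fin 3 × Fin 3 => ∑ b : Fin 3, ∑ c : Fin 3,
        Φ (p.1, b, c, p.2) * star (Φ (q.1, b, c, q.2)))
      = (1 / 9 : ℂ) • (1 : Matrix (Fin 3 × Fin 3) (Fin 3 × Fin 3) ℂ) ∧
    (Matrix.of fun p q : Fin 3 × Fin 3 => ∑ a : Fin 3, ∑ d : Fin 3,
        Φ (a, p.1, p.2, d) * star (Φ (a, q.1, q.2, d)))
      = (1 / 9 : ℂ) • (1 : Matrix (Fin 3 × Fin 3) (Fin 3 × Fin 3) ℂ) ∧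
    (Matrix.of fun p q : Fin 3 × Fin 3 => ∑ a : Fin 3, ∑ c : Fin 3,
        Φ (a, p.1, c, p.2) * star (Φ (a, q.1, c, q.2)))
      = (1 / 9 : ℂ) • (1 : Matrix (Fin 3 × Fin 3) (Fin 3 × Fin 3) ℂ) ∧
    (Matrix.of fun p q : Fin 3 × Fin 3 => ∑ a : Fin 3, ∑ b : Fin 3,
        Φ (a, b, p.1, p.2) * star (Φ (a, b, q.1, q.2)))
      = (1 / 9 : ℂ) • (1 : Matrix (Fin 3 × Fin 3) (Fin 3 × Fin 3) ℂ) := by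
  subst hΦ
  refine ⟨?_, ?_, ?_, ?_, ?_, ?_⟩
  · ext ⟨p1, p2⟩ ⟨q1, q2⟩
    simp only [Matrix.of_apply, Matrix.smul_apply, Matrix.one_apply, smul_eq_mul]
    rw [entry_eq (fun c d => p2 = p1 + d ∧ c = p1 + d + d) (fun c d => q2 = q1 + d ∧ c = q1 + d + d) (card1 p1 p2 q1 q2)]
    split_ifs <;> norm_num
  · ext ⟨p1, p2⟩ ⟨q1, q2⟩
    simp only [Matrix.of_apply, Matrix.smul_apply, Matrix.one_apply, smul_eq_mul]
    rw [entry_eq (fun c d => c = p1 + d ∧ p2 = p1 + d + d) (fun c d => c = q1 + d ∧ q2 = q1 + d + d) (card2 p1 p2 q1 q2)]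
    split_ifs <;> norm_num
  · ext ⟨p1, p2⟩ ⟨q1, q2⟩
    simp only [Matrix.of_apply, Matrix.smul_apply, Matrix.one_apply, smul_eq_mul]
    rw [entry_eq (fun c d => c = p1 + p2 ∧ d = p1 + p2 + p2) (fun c d => c = q1 + q2 ∧ d = q1 + q2 + q2) (card3 p1 p2 q1 q2)]
    split_ifs <;> norm_num
  · ext ⟨p1, p2⟩ ⟨q1, q2⟩
    simp only [Matrix.of_apply, Matrix.smul_apply, Matrix.one_apply, smul_eq_mul]
    rw [entry_eq (fun c d => p1 = c + d ∧ p2 = c + d + d) (fun c d => q1 = c + d ∧ q2 = c + d + d) (card4 p1 p2 q1 q2)]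
    split_ifs <;> norm_num
  · ext ⟨p1, p2⟩ ⟨q1, q2⟩
    simp only [Matrix.of_apply, Matrix.smul_apply, Matrix.one_apply, smul_eq_mul]
    rw [entry_eq (fun c d => p1 = c + p2 ∧ d = c + p2 + p2) (fun c d => q1 = c + q2 ∧ d = c + q2 + q2) (card5 p1 p2 q1 q2)]
    split_ifs <;> norm_num
  · ext ⟨p1, p2⟩ ⟨q1, q2⟩
    simp only [Matrix.of_apply, Matrix.smul_apply, Matrix.one_apply, smul_eq_mul]
    rw [entry_eq (fun c d => d = c + p2 ∧ p1 = c + p2 + p2) (fun c d => d = c + q2 ∧ q1 = c + q2 + q2) (card6 p1 p2 q1 q2)]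
    split_ifs <;> norm_num
end

section
/- Let p_c = 1/12, λ = (1+√5)/2, and suppose sequences s_j, d_j of reals in [0,1] satisfy s_0 = ε ≤ r·p_c for some r ∈ (0,1], d_0 = ε², and the recursions s_{j+1} ≤ 3d_j + 3s_j², d_{j+1} ≤ 3s_j(3d_j + 3s_j²). Then for all j, s_j ≤ p_c · r^{λ^j} and d_j ≤ (1/48) · r^{λ^{j+1}}. -/
/-- The hierarchical-recovery erasure bounds for the
single-qubit hexagon code: with `p_c = 1/12`, `λ = (1+√5)/2`, if
`s₀ = ε ≤ r·p_c` (`0 < r ≤ 1`), `d₀ = ε²`, and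
`s_{j+1} ≤ 3d_j + 3s_j²`, `d_{j+1} ≤ 3s_j(3d_j + 3s_j²)`, then for all `j`,
`s_j ≤ p_c · r^{λ^j}` and `d_j ≤ (1/48) · r^{λ^{j+1}}`. -/
theorem hexagon_erasure_recursion_bound (s d : ℕ → ℝ) (ε r : ℝ)
    (hr0 : 0 < r) (hr1 : r ≤ 1)
    (hs : ∀ j, 0 ≤ s j ∧ s j ≤ 1) (hd : ∀ j, 0 ≤ d j ∧ d j ≤ 1)
    (hs0 : s 0 = ε) (hε : ε ≤ r * (1 / 12)) (hd0 : d 0 = ε ^ 2)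
    (hsrec : ∀ j, s (j + 1) ≤ 3 * d j + 3 * (s j) ^ 2)
    (hdrec : ∀ j, d (j + 1) ≤ 3 * s j * (3 * d j + 3 * (s j) ^ 2)) :
    ∀ j : ℕ,
      s j ≤ (1 / 12) * r ^ (((1 + Real.sqrt 5) / 2) ^ j) ∧
      d j ≤ (1 / 48) * r ^ (((1 + Real.sqrt 5) / 2) ^ (j + 1)) := by
  set L : ℝ := (1 + Real.sqrt 5) / 2 with hL
  have h5 : Real.sqrt 5 ^ 2 = 5 := Real.sq_sqrt (by norm_num)
  have hs5 : (1:ℝ) ≤ Real.sqrt 5 := by nlinarith [Real.sqrt_nonneg 5]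
  have hs5' : Real.sqrt 5 ≤ 3 := by nlinarith [Real.sqrt_nonneg 5]
  have hL1 : (1:ℝ) ≤ L := by rw [hL]; linarith
  have hL2 : L ≤ 2 := by rw [hL]; linarith
  have hLsq : L ^ 2 = L + 1 := by rw [hL]; field_simp; nlinarith
  have hrp : ∀ x : ℝ, 0 < r ^ x := fun x => Real.rpow_pos_of_pos hr0 x
  have hmono : ∀ a b : ℝ, a ≤ b → r ^ b ≤ r ^ a :=
    fun a b h => Real.rpow_le_rpow_of_exponent_ge hr0 hr1 h
  have hε0 : 0 ≤ ε := hs0 ▸ (hs 0).1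
  clear_value L
  intro j
  induction j with
  | zero =>
    constructor
    · rw [hs0, pow_zero, Real.rpow_one]
      linarith
    · rw [hd0, zero_add, pow_one]
      have h1 : ε ^ 2 ≤ (r * (1/12)) ^ 2 := pow_le_pow_left₀ hε0 hε 2
      have h2 : r ^ (2:ℝ) ≤ r ^ L := hmono L 2 hL2
      have h3 : r ^ (2:ℝ) = r ^ (2:ℕ) := by
        rw [← Real.rpow_natCast r 2]; norm_num
      have h4 : r ^ (2:ℕ) ≤ r ^ L := by rw [← h3]; exact h2
      have h1' : ε ^ 2 ≤ r ^ (2:ℕ) * (1/144) := by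
        calc ε ^ 2 ≤ (r * (1/12)) ^ 2 := h1
          _ = r ^ (2:ℕ) * (1/144) := by ring
      have hp : (0:ℝ) < r ^ L := hrp L
      clear h3 h2 hmono hrp hs hd hsrec hdrec hL hLsq
      linarith [h1', h4, hp]
  | succ j ih =>
    obtain ⟨ihs, ihd⟩ := ih
    have hsj0 := (hs j).1
    have hdj0 := (hd j).1
    have hLj0 : (0:ℝ) ≤ L ^ j := pow_nonneg (by linarith) j
    have hsq : (s j) ^ 2 ≤ (1/144) * r ^ (2 * L ^ j) := by
      have h1 : (s j) ^ 2 ≤ ((1/12) * r ^ (L ^ j)) ^ 2 := pow_le_pow_left₀ hsj0 ihs 2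
      have h2 : ((1/12) * r ^ (L ^ j)) ^ 2 = (1/144) * r ^ (2 * L ^ j) := by
        rw [mul_pow, sq (r ^ (L ^ j)), ← Real.rpow_add hr0, ← two_mul]
        norm_num
      linarith [h2 ▸ h1]
    have hexp1 : L ^ (j+1) ≤ 2 * L ^ j := by
      rw [pow_succ]; nlinarith
    have hm1 : r ^ (2 * L ^ j) ≤ r ^ (L ^ (j+1)) := hmono _ _ hexp1
    have hA : 3 * d j + 3 * (s j) ^ 2 ≤ (1/12) * r ^ (L ^ (j+1)) := by
      nlinarith
    constructor
    · exact le_trans (hsrec j) hA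
    · have hA0 : (0:ℝ) ≤ 3 * d j + 3 * (s j) ^ 2 := by positivity
      have hmul : 3 * s j * (3 * d j + 3 * (s j) ^ 2)
          ≤ 3 * ((1/12) * r ^ (L ^ j)) * ((1/12) * r ^ (L ^ (j+1))) := by
        have h := mul_le_mul ihs hA hA0 (by positivity : (0:ℝ) ≤ (1/12) * r ^ (L ^ j))
        nlinarith
      have hexp2 : L ^ (j+2) = L ^ j + L ^ (j+1) := by
        calc L ^ (j+2) = L ^ j * L ^ 2 := by ring
          _ = L ^ j * (L + 1) := by rw [hLsq]
          _ = L ^ j + L ^ (j+1) := by ring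
      have heq : 3 * ((1/12) * r ^ (L ^ j)) * ((1/12) * r ^ (L ^ (j+1)))
          = (1/48) * r ^ (L ^ (j+2)) := by
        rw [hexp2, Real.rpow_add hr0]; ring
      calc d (j+1) ≤ 3 * s j * (3 * d j + 3 * (s j) ^ 2) := hdrec j
        _ ≤ 3 * ((1/12) * r ^ (L ^ j)) * ((1/12) * r ^ (L ^ (j+1))) := hmul
        _ = (1/48) * r ^ (L ^ (j+2)) := heq
        _ = (1/48) * r ^ (L ^ (j+1+1)) := by norm_num
end

section
/- For a stabilizer code on n prime-dimensional qudits with k logical qudits, and any subset A of the qudits with complement A^c, the numbers of independent logical Pauli operators supported on A and on A^c satisfy ℓ(A) + ℓ(A^c) = 2k. Consequently, if k = 1 and a symmetry forces ℓ(A) to be even (e.g., ℓ^X(A) = ℓ^Z(A) in a self-dual CSS code), then either ℓ(A) = 2 or ℓ(A^c) = 2; i.e., the full logical algebra is reconstructable on A or on A^c. -/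
/-- The symplectic form on the phase space `(x, z)`-description of the
`n`-qudit Pauli group modulo phases (qudits of dimension `p`). -/
def sympForm (p n : ℕ) (u v : Fin n → ZMod p × ZMod p) : ZMod p :=
  ∑ i, ((u i).1 * (v i).2 - (u i).2 * (v i).1)

/-- The submodule of Pauli phase-space vectors supported on a subset `A` of
the qudits. -/
def supportedOn (p n : ℕ) (A : Finset (Fin n)) :
    Submodule (ZMod p) (Fin n → ZMod p × ZMod p) where
  carrier := {v | ∀ i ∉ A, v i = 0}
  add_mem' := by
    intro a b ha hb i hi
    simp only [Pi.add_apply, ha i hi, hb i hi, add_zero]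
  zero_mem' := by intro i _; rfl
  smul_mem' := by
    intro c v hv i hi
    simp only [Pi.smul_apply, hv i hi, smul_zero]

/-! In phase space `V = (𝔽_p²)ⁿ` with its symplectic form, write `V_A` for the vectors
supported on `A`, so that `V_A = V_{Aᶜ}^⊥` and `C = S^⊥`. Then `C ∩ V_A = (S + V_{Aᶜ})^⊥`,
and since `S ≤ C` the kernel of `C ∩ V_A → C/S` is `S ∩ V_A`; hence
`ℓ(A) = 2n - dim S - dim V_{Aᶜ} + dim (S ∩ V_{Aᶜ}) - dim (S ∩ V_A)`.
In `ℓ(A) + ℓ(Aᶜ)` the intersection terms cancel and `dim V_A + dim V_{Aᶜ} = 2n`, leaving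
`2n - 2 dim S = 2k`. For `k = 1` an even `ℓ(A)` is `0` or `2`. -/

open Module

namespace Submodule

variable {K V : Type*} [Field K] [AddCommGroup V] [Module K V]

theorem finrank_map_mkQ_add_finrank_inf (S W : Submodule K V) [FiniteDimensional K W] :
    finrank K (W.map S.mkQ) + finrank K ↥(S ⊓ W) = finrank K W := by
  rw [← LinearMap.range_domRestrict,
    ← LinearMap.finrank_range_add_finrank_ker (S.mkQ.domRestrict W),
    LinearMap.ker_domRestrict, ker_mkQ, (equivSubtypeMap W (S.comap W.subtype)).finrank_eq, map_comap_subtype, inf_comm]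

end Submodule

namespace LinearMap.BilinForm

variable {K V : Type*} [Field K] [AddCommGroup V] [Module K V]

theorem orthogonal_sup (B : LinearMap.BilinForm K V) (U W : Submodule K V) :
    B.orthogonal (U ⊔ W) = B.orthogonal U ⊓ B.orthogonal W := by
  refine le_antisymm (le_inf (B.orthogonal_le le_sup_left) (B.orthogonal_le le_sup_right)) ?_
  rintro x ⟨hU, hW⟩ _ hu
  obtain ⟨a, ha, b, hb, rfl⟩ := Submodule.mem_sup.mp hu
  rw [map_add, LinearMap.add_apply, hU a ha, hW b hb, add_zero]

variable [FiniteDimensional K V] {B : LinearMap.BilinForm K V}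

theorem finrank_map_mkQ_orthogonal_inf (hB : B.Nondegenerate) {S P Q : Submodule K V}
    (hS : S ≤ B.orthogonal S) (hP : P = B.orthogonal Q) :
    finrank K ((B.orthogonal S ⊓ P).map S.mkQ) + finrank K ↥(S ⊓ P) + finrank K S +
      finrank K Q = finrank K V + finrank K ↥(S ⊓ Q) := by
  subst hP
  have hquot := Submodule.finrank_map_mkQ_add_finrank_inf S (B.orthogonal S ⊓ B.orthogonal Q)
  rw [← inf_assoc, inf_of_le_left hS, ← orthogonal_sup] at hquot
  have hperp := finrank_orthogonal hB (S ⊔ Q)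
  have hsup := Submodule.finrank_sup_add_finrank_inf_eq S Q
  have hle := Submodule.finrank_le (S ⊔ Q)
  rw [← orthogonal_sup]
  omega

theorem finrank_map_mkQ_orthogonal_inf_add_of_eq_orthogonal (hB : B.Nondegenerate)
    {S P Q : Submodule K V} (hS : S ≤ B.orthogonal S) (hP : P = B.orthogonal Q)
    (hQ : Q = B.orthogonal P) :
    finrank K ((B.orthogonal S ⊓ P).map S.mkQ) + finrank K ((B.orthogonal S ⊓ Q).map S.mkQ) +
      2 * finrank K S = finrank K V := by
  have hPQ := finrank_map_mkQ_orthogonal_inf hB hS hP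
  have hQP := finrank_map_mkQ_orthogonal_inf hB hS hQ
  have hdim := finrank_orthogonal hB Q
  have hle := Submodule.finrank_le Q
  rw [← hP] at hdim
  omega

end LinearMap.BilinForm

section Symplectic

variable (p n : ℕ)

noncomputable def sympBilin : LinearMap.BilinForm (ZMod p) (Fin n → ZMod p × ZMod p) :=
  LinearMap.mk₂ (ZMod p) (sympForm p n)
    (fun _ _ _ => by
      simp only [sympForm, ← Finset.sum_add_distrib]
      refine Finset.sum_congr rfl fun _ _ => ?_
      simp only [Pi.add_apply, Prod.fst_add, Prod.snd_add]
      ring)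
    (fun _ _ _ => by
      simp only [sympForm, Finset.smul_sum]
      refine Finset.sum_congr rfl fun _ _ => ?_
      simp only [Pi.smul_apply, Prod.smul_fst, Prod.smul_snd, smul_eq_mul]
      ring)
    (fun _ _ _ => by
      simp only [sympForm, ← Finset.sum_add_distrib]
      refine Finset.sum_congr rfl fun _ _ => ?_
      simp only [Pi.add_apply, Prod.fst_add, Prod.snd_add]
      ring)
    (fun _ _ _ => by
      simp only [sympForm, Finset.smul_sum]
      refine Finset.sum_congr rfl fun _ _ => ?_
      simp only [Pi.smul_apply, Prod.smul_fst, Prod.smul_snd, smul_eq_mul]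
      ring)

theorem sympBilin_apply (u v : Fin n → ZMod p × ZMod p) :
    sympBilin p n u v = sympForm p n u v := rfl

theorem sympBilin_isAlt : (sympBilin p n).IsAlt := fun u =>
  (Finset.sum_eq_zero fun _ _ => by ring : sympForm p n u u = 0)

theorem sympForm_single_left (i : Fin n) (x : ZMod p × ZMod p) (v : Fin n → ZMod p × ZMod p) :
    sympForm p n (Pi.single i x) v = x.1 * (v i).2 - x.2 * (v i).1 := by
  rw [sympForm, Finset.sum_eq_single i]
  · simp
  · exact fun j _ hj => by simp [Pi.single_eq_of_ne hj]
  · simp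

theorem supportedOn_eq_orthogonal_compl (A : Finset (Fin n)) :
    supportedOn p n A = (sympBilin p n).orthogonal (supportedOn p n Aᶜ) := by
  ext v
  rw [LinearMap.BilinForm.mem_orthogonal_iff]
  constructor
  · intro hv w hw
    rw [sympBilin_apply]
    refine Finset.sum_eq_zero fun i _ => ?_
    by_cases hi : i ∈ A
    · simp [hw i (Finset.notMem_compl.mpr hi)]
    · simp [hv i hi]
  · intro h i hi
    have hsingle : ∀ x : ZMod p × ZMod p,
        (Pi.single i x : Fin n → ZMod p × ZMod p) ∈ supportedOn p n Aᶜ := fun x j hj =>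
      Pi.single_eq_of_ne (M := fun _ => ZMod p × ZMod p)
        (ne_of_mem_of_not_mem (Finset.mem_compl.mpr hi) hj).symm x
    have hz := h _ (hsingle (0, 1))
    have hx := h _ (hsingle (1, 0))
    rw [sympBilin_apply, sympForm_single_left] at hz hx
    simp only [zero_mul, one_mul, zero_sub, sub_zero, neg_eq_zero] at hz hx
    exact Prod.ext hz hx

theorem sympBilin_nondegenerate : (sympBilin p n).Nondegenerate := by
  refine (sympBilin_isAlt p n).isRefl.nondegenerate_iff_separatingRight.mpr ?_
  intro v hv
  have hmem : v ∈ supportedOn p n ∅ := by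
    rw [supportedOn_eq_orthogonal_compl]
    exact fun w _ => hv w
  exact funext fun i => hmem i (Finset.notMem_empty i)

theorem finrank_phaseSpace [Fact p.Prime] :
    finrank (ZMod p) (Fin n → ZMod p × ZMod p) = 2 * n := by
  simp [Module.finrank_pi_fintype, mul_comm]

end Symplectic

/-- cleaning lemma: For a stabilizer code on `n` qudits of
prime dimension `p` with `k` logical qudits — stabilizer `S` isotropic of
rank `n − k`, centralizer `C` — the number `ℓ(A)` of independent logical
operators supported on a subset `A` (dimension of the image of
`C ∩ supported(A)` in the logical space `C/S`) satisfies
`ℓ(A) + ℓ(Aᶜ) = 2k`.  Consequently if `k = 1` and a symmetry forces `ℓ(A)`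
to be even, then `ℓ(A) = 2` or `ℓ(Aᶜ) = 2`: the full logical algebra is
reconstructable on `A` or on `Aᶜ`. -/
theorem cleaning_lemma (p n k : ℕ) [Fact p.Prime] (hkn : k ≤ n)
    (S C : Submodule (ZMod p) (Fin n → ZMod p × ZMod p))
    (hiso : ∀ u ∈ S, ∀ v ∈ S, sympForm p n u v = 0)
    (hdimS : Module.finrank (ZMod p) S = n - k)
    (hC : ∀ v, v ∈ C ↔ ∀ s ∈ S, sympForm p n v s = 0) :
    (∀ A : Finset (Fin n),
      Module.finrank (ZMod p) (Submodule.map S.mkQ (C ⊓ supportedOn p n A)) +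
        Module.finrank (ZMod p) (Submodule.map S.mkQ (C ⊓ supportedOn p n Aᶜ)) = 2 * k) ∧
    (k = 1 → ∀ A : Finset (Fin n),
      Even (Module.finrank (ZMod p) (Submodule.map S.mkQ (C ⊓ supportedOn p n A))) →
      Module.finrank (ZMod p) (Submodule.map S.mkQ (C ⊓ supportedOn p n A)) = 2 ∨
      Module.finrank (ZMod p) (Submodule.map S.mkQ (C ⊓ supportedOn p n Aᶜ)) = 2) := by
  have hRefl := (sympBilin_isAlt p n).isRefl
  have hCS : C = (sympBilin p n).orthogonal S := by
    ext v
    rw [hC, LinearMap.BilinForm.mem_orthogonal_iff]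
    exact forall₂_congr fun s _ => ⟨hRefl v s, hRefl s v⟩
  have hSS : S ≤ (sympBilin p n).orthogonal S := fun u hu v hv => hiso v hv u hu
  have count : ∀ A : Finset (Fin n),
      finrank (ZMod p) (Submodule.map S.mkQ (C ⊓ supportedOn p n A)) +
        finrank (ZMod p) (Submodule.map S.mkQ (C ⊓ supportedOn p n Aᶜ)) = 2 * k := by
    intro A
    have h := LinearMap.BilinForm.finrank_map_mkQ_orthogonal_inf_add_of_eq_orthogonal
      (sympBilin_nondegenerate p n) hSS (supportedOn_eq_orthogonal_compl p n A)
      (by simpa using supportedOn_eq_orthogonal_compl p n Aᶜ)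
    rw [← hCS, hdimS, finrank_phaseSpace] at h
    omega
  refine ⟨count, fun hk A ⟨c, hc⟩ => ?_⟩
  have h := count A
  omega
end

section
/- Composing encoding isometries of stabilizer codes yields a stabilizer code: if M₁ is the Clifford encoding isometry of an [[n₁,k₁]] stabilizer code with stabilizer group S₁, and M₂ is the Clifford encoding isometry of an [[n₂,k₂]] stabilizer code with stabilizer group S₂, applied to m of the n₁ output qubits of M₁ together with k₂−m fresh input qubits (m ≤ n₁, m ≤ k₂), then the composite isometry encodes an [[n₁−m+n₂, k₁+k₂−m]] stabilizer code whose stabilizer group is generated by S₂ and M₂(S₁) (operators extended by identities as needed). -/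
open Matrix

/-- The Pauli operator on the qubits indexed by `ι`, with `X`-part `x` and
`Z`-part `z`, as a matrix in the computational basis `ι → ZMod 2`. -/
def pauliBase {ι : Type*} [Fintype ι] [DecidableEq ι] (x z : ι → ZMod 2) :
    Matrix (ι → ZMod 2) (ι → ZMod 2) ℂ :=
  Matrix.of fun a b => if a = x + b then (-1 : ℂ) ^ (ZMod.val (∑ i, z i * b i)) else 0

/-- A Pauli operator (including fourth-root-of-unity phases). -/
def IsPauli {ι : Type*} [Fintype ι] [DecidableEq ι]
    (M : Matrix (ι → ZMod 2) (ι → ZMod 2) ℂ) : Prop :=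
  ∃ (c : ℂ) (x z : ι → ZMod 2), c ^ 4 = 1 ∧ M = c • pauliBase x z

/-- Tensor (Kronecker) product of operators on disjoint sets of qubits. -/
def mtensor {ι₁ ι₂ κ₁ κ₂ : Type*}
    (M : Matrix (ι₁ → ZMod 2) (κ₁ → ZMod 2) ℂ)
    (N : Matrix (ι₂ → ZMod 2) (κ₂ → ZMod 2) ℂ) :
    Matrix ((ι₁ ⊕ ι₂) → ZMod 2) ((κ₁ ⊕ κ₂) → ZMod 2) ℂ :=
  Matrix.of fun a b => M (a ∘ Sum.inl) (b ∘ Sum.inl) * N (a ∘ Sum.inr) (b ∘ Sum.inr)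

/-- The joint `+1` eigenspace of a set of operators. -/
def fixedSet {ι : Type*} [Fintype ι] [DecidableEq ι]
    (G : Set (Matrix (ι → ZMod 2) (ι → ZMod 2) ℂ)) : Set ((ι → ZMod 2) → ℂ) :=
  {v | ∀ g ∈ G, g.mulVec v = v}

/-!
Up to the relabelling `(E ⊕ F) ⊕ G ≃ E ⊕ (F ⊕ G)` of qubits, the composite is
`(1 ⊗ M₂) * (M₁ ⊗ 1)`. Since a Pauli operator on a disjoint union of qubits is a tensor product
of Pauli operators, tensor products, products and qubit relabellings of Clifford isometries are
Clifford isometries.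

For the code space: `M Mᴴ` is the projection onto the code of an isometric encoder `M`, and it
acts slice by slice on `1 ⊗ M` and `M ⊗ 1`, so the range of `1 ⊗ M` (of `M ⊗ 1`) is the joint
fixed space of the `1 ⊗ s` (of the `s ⊗ 1`). An injective `T` with `T R_s = t_s T` maps the joint
fixed space of the `R_s` onto the part of its range fixed by the `t_s`; with `T = 1 ⊗ M₂` and
`R_s = s ⊗ 1` this gives the code stabilized by `1 ⊗ S₂` and `t(S₁) = M₂(S₁)`.
-/

namespace Matrix

theorem range_mulVec_reindex_refl {α l m n : Type*} [NonUnitalNonAssocSemiring α] [Fintype n]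
    (e : m ≃ l) (M : Matrix m n α) :
    Set.range (reindex e (Equiv.refl n) M).mulVec = (· ∘ e) ⁻¹' Set.range M.mulVec := by
  ext v
  simp only [reindex_apply, Set.mem_range, Set.mem_preimage]
  simp only [submatrix_mulVec_equiv, Equiv.comp_symm_eq]
  rfl

theorem mulVec_mul_eq_comp {α l m n : Type*} [NonUnitalSemiring α] [Fintype m] [Fintype n]
    (A : Matrix l m α) (B : Matrix m n α) : (A * B).mulVec = A.mulVec ∘ B.mulVec :=
  funext fun v => (mulVec_mulVec v A B).symm

section Isometry

variable {α l m n o : Type*} [CommSemiring α] [StarRing α]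

def IsIsometry [Fintype m] [DecidableEq n] (M : Matrix m n α) : Prop := Mᴴ * M = 1

variable [Fintype m] [DecidableEq n]

theorem isIsometry_one [Fintype n] : (1 : Matrix n n α).IsIsometry := by
  rw [IsIsometry, conjTranspose_one, Matrix.one_mul]

theorem IsIsometry.mul [Fintype n] [DecidableEq o] {A : Matrix m n α} {B : Matrix n o α}
    (hA : A.IsIsometry) (hB : B.IsIsometry) : (A * B).IsIsometry := by
  rw [IsIsometry, conjTranspose_mul, Matrix.mul_assoc, ← Matrix.mul_assoc Aᴴ, hA,
    Matrix.one_mul, hB]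

theorem IsIsometry.reindex [Fintype l] [DecidableEq o] {M : Matrix m n α} (hM : M.IsIsometry)
    (e : m ≃ l) (f : n ≃ o) : (reindex e f M).IsIsometry := by
  rw [IsIsometry, conjTranspose_reindex, reindex_apply, reindex_apply, submatrix_mul_equiv, hM,
    submatrix_one_equiv]

theorem IsIsometry.mulVec_injective [Fintype n] {M : Matrix m n α} (hM : M.IsIsometry) :
    Function.Injective M.mulVec := fun v w h => by
  have h' := congrArg Mᴴ.mulVec h
  rwa [mulVec_mulVec, mulVec_mulVec, hM, one_mulVec, one_mulVec] at h'

theorem IsIsometry.mem_range_mulVec_iff [Fintype n] {M : Matrix m n α} (hM : M.IsIsometry)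
    (v : m → α) :
    v ∈ Set.range M.mulVec ↔ (M * Mᴴ).mulVec v = v := by
  constructor
  · rintro ⟨w, rfl⟩
    rw [mulVec_mulVec, Matrix.mul_assoc, hM, Matrix.mul_one]
  · intro hv
    exact ⟨Mᴴ.mulVec v, by rwa [mulVec_mulVec]⟩

end Isometry

end Matrix

section Tensor

variable {ι₁ ι₂ κ₁ κ₂ μ₁ μ₂ : Type*}

theorem mtensor_apply_sumElim (M : Matrix (ι₁ → ZMod 2) (κ₁ → ZMod 2) ℂ)
    (N : Matrix (ι₂ → ZMod 2) (κ₂ → ZMod 2) ℂ) (a₁ : ι₁ → ZMod 2) (a₂ : ι₂ → ZMod 2)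
    (b₁ : κ₁ → ZMod 2) (b₂ : κ₂ → ZMod 2) :
    mtensor M N (Sum.elim a₁ a₂) (Sum.elim b₁ b₂) = M a₁ b₁ * N a₂ b₂ := rfl

theorem mtensor_mul [Fintype κ₁] [DecidableEq κ₁] [Fintype κ₂] [DecidableEq κ₂]
    (A : Matrix (ι₁ → ZMod 2) (κ₁ → ZMod 2) ℂ) (B : Matrix (ι₂ → ZMod 2) (κ₂ → ZMod 2) ℂ)
    (C : Matrix (κ₁ → ZMod 2) (μ₁ → ZMod 2) ℂ) (D : Matrix (κ₂ → ZMod 2) (μ₂ → ZMod 2) ℂ) :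
    mtensor A B * mtensor C D = mtensor (A * C) (B * D) := by
  ext a b
  simp only [mtensor, mul_apply, of_apply, Finset.sum_mul_sum]
  rw [← (Equiv.sumArrowEquivProdArrow κ₁ κ₂ (ZMod 2)).symm.sum_comp, Fintype.sum_prod_type]
  refine Finset.sum_congr rfl fun x _ => Finset.sum_congr rfl fun y _ => ?_
  simp only [Equiv.sumArrowEquivProdArrow, Equiv.coe_fn_symm_mk, Sum.elim_comp_inl,
    Sum.elim_comp_inr]
  ring

theorem one_mtensor_one [Fintype ι₁] [DecidableEq ι₁] [Fintype ι₂] [DecidableEq ι₂] :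
    mtensor (1 : Matrix (ι₁ → ZMod 2) (ι₁ → ZMod 2) ℂ)
      (1 : Matrix (ι₂ → ZMod 2) (ι₂ → ZMod 2) ℂ) = 1 := by
  ext a b
  rw [← Sum.elim_comp_inl_inr a, ← Sum.elim_comp_inl_inr b, mtensor_apply_sumElim]
  simp only [one_apply, Sum.elim_eq_iff, ite_zero_mul_ite_zero, one_mul]

theorem conjTranspose_mtensor (M : Matrix (ι₁ → ZMod 2) (κ₁ → ZMod 2) ℂ)
    (N : Matrix (ι₂ → ZMod 2) (κ₂ → ZMod 2) ℂ) : (mtensor M N)ᴴ = mtensor Mᴴ Nᴴ := by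
  ext a b
  simp only [mtensor, conjTranspose_apply, of_apply, star_mul']

theorem smul_mtensor (c : ℂ) (M : Matrix (ι₁ → ZMod 2) (κ₁ → ZMod 2) ℂ)
    (N : Matrix (ι₂ → ZMod 2) (κ₂ → ZMod 2) ℂ) : mtensor (c • M) N = c • mtensor M N := by
  ext a b
  simp only [mtensor, of_apply, Matrix.smul_apply, smul_eq_mul, mul_assoc]

theorem mtensor_smul (c : ℂ) (M : Matrix (ι₁ → ZMod 2) (κ₁ → ZMod 2) ℂ)
    (N : Matrix (ι₂ → ZMod 2) (κ₂ → ZMod 2) ℂ) : mtensor M (c • N) = c • mtensor M N := by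
  ext a b
  simp only [mtensor, of_apply, Matrix.smul_apply, smul_eq_mul, mul_left_comm]

theorem Matrix.IsIsometry.mtensor [Fintype ι₁] [DecidableEq ι₁] [Fintype ι₂] [DecidableEq ι₂]
    [Fintype κ₁] [DecidableEq κ₁] [Fintype κ₂] [DecidableEq κ₂]
    {M : Matrix (ι₁ → ZMod 2) (κ₁ → ZMod 2) ℂ}
    {N : Matrix (ι₂ → ZMod 2) (κ₂ → ZMod 2) ℂ} (hM : M.IsIsometry) (hN : N.IsIsometry) :
    (mtensor M N).IsIsometry := by
  rw [IsIsometry, conjTranspose_mtensor, mtensor_mul, hM, hN, one_mtensor_one]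

end Tensor

section Pauli

variable {ι κ : Type*} [Fintype ι] [DecidableEq ι] [Fintype κ] [DecidableEq κ]

theorem neg_one_pow_val_add (s t : ZMod 2) :
    (-1 : ℂ) ^ (s + t).val = (-1) ^ s.val * (-1) ^ t.val := by
  rw [ZMod.val_add, ← neg_one_pow_eq_pow_mod_two, pow_add]

theorem pauliBase_sumElim (x₁ z₁ : ι → ZMod 2) (x₂ z₂ : κ → ZMod 2) :
    pauliBase (Sum.elim x₁ x₂) (Sum.elim z₁ z₂) = mtensor (pauliBase x₁ z₁) (pauliBase x₂ z₂) := by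
  ext a b
  rw [← Sum.elim_comp_inl_inr a, ← Sum.elim_comp_inl_inr b, mtensor_apply_sumElim]
  simp only [pauliBase, of_apply, ← Sum.elim_add_add, Sum.elim_eq_iff, Fintype.sum_sum_type,
    Sum.elim_inl, Sum.elim_inr, neg_one_pow_val_add, ite_zero_mul_ite_zero]

theorem isPauli_one : IsPauli (1 : Matrix (ι → ZMod 2) (ι → ZMod 2) ℂ) := by
  refine ⟨1, 0, 0, one_pow 4, ?_⟩
  ext a b
  simp [pauliBase, one_apply]

theorem IsPauli.exists_eq_mtensor {P : Matrix ((ι ⊕ κ) → ZMod 2) ((ι ⊕ κ) → ZMod 2) ℂ}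
    (hP : IsPauli P) : ∃ P₁ P₂, IsPauli P₁ ∧ IsPauli P₂ ∧ P = mtensor P₁ P₂ := by
  obtain ⟨c, x, z, hc, rfl⟩ := hP
  refine ⟨c • pauliBase (x ∘ Sum.inl) (z ∘ Sum.inl), pauliBase (x ∘ Sum.inr) (z ∘ Sum.inr),
    ⟨c, _, _, hc, rfl⟩, ⟨1, _, _, one_pow 4, (one_smul _ _).symm⟩, ?_⟩
  rw [smul_mtensor, ← pauliBase_sumElim, Sum.elim_comp_inl_inr, Sum.elim_comp_inl_inr]

theorem IsPauli.mtensor {P : Matrix (ι → ZMod 2) (ι → ZMod 2) ℂ}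
    {P' : Matrix (κ → ZMod 2) (κ → ZMod 2) ℂ} (hP : IsPauli P) (hP' : IsPauli P') :
    IsPauli (mtensor P P') := by
  obtain ⟨c, x, z, hc, rfl⟩ := hP
  obtain ⟨c', x', z', hc', rfl⟩ := hP'
  refine ⟨c * c', Sum.elim x x', Sum.elim z z', by rw [mul_pow, hc, hc', one_mul], ?_⟩
  rw [smul_mtensor, mtensor_smul, smul_smul, pauliBase_sumElim]

theorem IsPauli.reindex_arrowCongr {P : Matrix (ι → ZMod 2) (ι → ZMod 2) ℂ} (hP : IsPauli P)
    (σ : ι ≃ κ) :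
    IsPauli (reindex (σ.arrowCongr (Equiv.refl (ZMod 2)))
      (σ.arrowCongr (Equiv.refl (ZMod 2))) P) := by
  obtain ⟨c, x, z, hc, rfl⟩ := hP
  refine ⟨c, x ∘ σ.symm, z ∘ σ.symm, hc, ?_⟩
  set e := σ.arrowCongr (Equiv.refl (ZMod 2))
  ext a b
  obtain ⟨a, rfl⟩ := e.surjective a
  obtain ⟨b, rfl⟩ := e.surjective b
  have hadd : x ∘ σ.symm + e b = e (x + b) := rfl
  have hsum : ∑ i, (z ∘ σ.symm) i * e b i = ∑ i, z i * b i := σ.symm.sum_comp fun i => z i * b i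
  simp only [reindex_apply, submatrix_apply, Equiv.symm_apply_apply, Matrix.smul_apply, pauliBase,
    of_apply, hadd, e.injective.eq_iff, hsum]

end Pauli

section Clifford

variable {ι ι' κ κ' μ : Type*} [Fintype ι] [DecidableEq ι] [Fintype ι'] [DecidableEq ι']
  [Fintype κ] [DecidableEq κ] [Fintype κ'] [DecidableEq κ'] [Fintype μ] [DecidableEq μ]

def IsClifford (M : Matrix (κ → ZMod 2) (ι → ZMod 2) ℂ) : Prop :=
  ∀ P : Matrix (ι → ZMod 2) (ι → ZMod 2) ℂ, IsPauli P →
    ∃ Q : Matrix (κ → ZMod 2) (κ → ZMod 2) ℂ, IsPauli Q ∧ M * P = Q * M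

theorem isClifford_one : IsClifford (1 : Matrix (ι → ZMod 2) (ι → ZMod 2) ℂ) :=
  fun P hP => ⟨P, hP, by rw [Matrix.one_mul, Matrix.mul_one]⟩

theorem IsClifford.mul {A : Matrix (μ → ZMod 2) (κ → ZMod 2) ℂ}
    {B : Matrix (κ → ZMod 2) (ι → ZMod 2) ℂ} (hA : IsClifford A) (hB : IsClifford B) :
    IsClifford (A * B) := by
  intro P hP
  obtain ⟨Q, hQ, hBQ⟩ := hB P hP
  obtain ⟨R, hR, hAR⟩ := hA Q hQ
  exact ⟨R, hR, by rw [Matrix.mul_assoc, hBQ, ← Matrix.mul_assoc, hAR, Matrix.mul_assoc]⟩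

theorem IsClifford.mtensor {M : Matrix (κ → ZMod 2) (ι → ZMod 2) ℂ}
    {N : Matrix (κ' → ZMod 2) (ι' → ZMod 2) ℂ} (hM : IsClifford M) (hN : IsClifford N) :
    IsClifford (_root_.mtensor M N) := by
  intro P hP
  obtain ⟨P₁, P₂, hP₁, hP₂, rfl⟩ := hP.exists_eq_mtensor
  obtain ⟨Q₁, hQ₁, hMQ₁⟩ := hM P₁ hP₁
  obtain ⟨Q₂, hQ₂, hNQ₂⟩ := hN P₂ hP₂
  exact ⟨_root_.mtensor Q₁ Q₂, hQ₁.mtensor hQ₂, by rw [mtensor_mul, mtensor_mul, hMQ₁, hNQ₂]⟩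

theorem IsClifford.reindex_arrowCongr {M : Matrix (κ → ZMod 2) (ι → ZMod 2) ℂ}
    (hM : IsClifford M) (σ : κ ≃ κ') :
    IsClifford (reindex (σ.arrowCongr (Equiv.refl (ZMod 2))) (Equiv.refl _) M) := by
  intro P hP
  obtain ⟨Q, hQ, hMQ⟩ := hM P hP
  set e := σ.arrowCongr (Equiv.refl (ZMod 2))
  refine ⟨reindex e e Q, hQ.reindex_arrowCongr σ, ?_⟩
  calc reindex e (Equiv.refl _) M * P
      = reindex e (Equiv.refl _) M * reindex (Equiv.refl _) (Equiv.refl _) P := rfl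
    _ = reindex e (Equiv.refl _) (Q * M) := by
      rw [reindex_apply, reindex_apply, reindex_apply, submatrix_mul_equiv, hMQ]
    _ = reindex e e Q * reindex e (Equiv.refl _) M := by
      rw [reindex_apply, reindex_apply, reindex_apply, submatrix_mul_equiv]

end Clifford

section StabilizerCode

variable {ι κ : Type*} [Fintype ι] [DecidableEq ι] [Fintype κ] [DecidableEq κ]

theorem fixedSet_union (A B : Set (Matrix (ι → ZMod 2) (ι → ZMod 2) ℂ)) :
    fixedSet (A ∪ B) = fixedSet A ∩ fixedSet B := by
  ext v
  simp only [fixedSet, Set.mem_union, or_imp, forall_and, Set.mem_ofPred_eq, Set.mem_inter_iff]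

theorem Matrix.IsIsometry.mul_conjTranspose_mulVec_eq_self_iff {μ : Type*} [Fintype μ]
    [DecidableEq μ] {M : Matrix (κ → ZMod 2) (μ → ZMod 2) ℂ}
    {S : Set (Matrix (κ → ZMod 2) (κ → ZMod 2) ℂ)} (hM : M.IsIsometry)
    (hMS : Set.range M.mulVec = fixedSet S) (w : (κ → ZMod 2) → ℂ) :
    (M * Mᴴ).mulVec w = w ↔ ∀ s ∈ S, s.mulVec w = w := by
  rw [← hM.mem_range_mulVec_iff, hMS]
  rfl

theorem one_mtensor_mulVec_sumElim {ρ : Type*} (N : Matrix (ρ → ZMod 2) (κ → ZMod 2) ℂ)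
    (v : ((ι ⊕ κ) → ZMod 2) → ℂ) (a : ι → ZMod 2) (b : ρ → ZMod 2) :
    (mtensor (1 : Matrix (ι → ZMod 2) (ι → ZMod 2) ℂ) N).mulVec v (Sum.elim a b) =
      N.mulVec (fun b' => v (Sum.elim a b')) b := by
  simp only [mulVec, dotProduct, mtensor, of_apply]
  rw [← (Equiv.sumArrowEquivProdArrow ι κ (ZMod 2)).symm.sum_comp, Fintype.sum_prod_type]
  simp only [Equiv.sumArrowEquivProdArrow, Equiv.coe_fn_symm_mk, Sum.elim_comp_inl,
    Sum.elim_comp_inr, one_apply]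
  rw [Fintype.sum_eq_single a fun a' ha' => by simp [Ne.symm ha']]
  simp

theorem mtensor_one_mulVec_sumElim {ρ : Type*} (M : Matrix (ρ → ZMod 2) (κ → ZMod 2) ℂ)
    (v : ((κ ⊕ ι) → ZMod 2) → ℂ) (a : ρ → ZMod 2) (b : ι → ZMod 2) :
    (mtensor M (1 : Matrix (ι → ZMod 2) (ι → ZMod 2) ℂ)).mulVec v (Sum.elim a b) =
      M.mulVec (fun a' => v (Sum.elim a' b)) a := by
  simp only [mulVec, dotProduct, mtensor, of_apply]
  rw [← (Equiv.sumArrowEquivProdArrow κ ι (ZMod 2)).symm.sum_comp, Fintype.sum_prod_type]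
  simp only [Equiv.sumArrowEquivProdArrow, Equiv.coe_fn_symm_mk, Sum.elim_comp_inl,
    Sum.elim_comp_inr, one_apply]
  rw [Finset.sum_comm, Fintype.sum_eq_single b fun b' hb' => by simp [Ne.symm hb']]
  simp

theorem one_mtensor_mulVec_eq_self_iff (N : Matrix (κ → ZMod 2) (κ → ZMod 2) ℂ)
    (v : ((ι ⊕ κ) → ZMod 2) → ℂ) :
    (mtensor (1 : Matrix (ι → ZMod 2) (ι → ZMod 2) ℂ) N).mulVec v = v ↔
      ∀ a, N.mulVec (fun b => v (Sum.elim a b)) = fun b => v (Sum.elim a b) := by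
  constructor
  · intro h a
    funext b
    rw [← one_mtensor_mulVec_sumElim, h]
  · intro h
    funext c
    rw [← Sum.elim_comp_inl_inr c, one_mtensor_mulVec_sumElim, h]

theorem mtensor_one_mulVec_eq_self_iff (M : Matrix (κ → ZMod 2) (κ → ZMod 2) ℂ)
    (v : ((κ ⊕ ι) → ZMod 2) → ℂ) :
    (mtensor M (1 : Matrix (ι → ZMod 2) (ι → ZMod 2) ℂ)).mulVec v = v ↔
      ∀ b, M.mulVec (fun a => v (Sum.elim a b)) = fun a => v (Sum.elim a b) := by
  constructor
  · intro h b
    funext a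
    rw [← mtensor_one_mulVec_sumElim, h]
  · intro h
    funext c
    rw [← Sum.elim_comp_inl_inr c, mtensor_one_mulVec_sumElim, h]

theorem range_mulVec_one_mtensor {μ : Type*} [Fintype μ] [DecidableEq μ]
    {M : Matrix (κ → ZMod 2) (μ → ZMod 2) ℂ} {S : Set (Matrix (κ → ZMod 2) (κ → ZMod 2) ℂ)}
    (hM : M.IsIsometry) (hMS : Set.range M.mulVec = fixedSet S) :
    Set.range (mtensor (1 : Matrix (ι → ZMod 2) (ι → ZMod 2) ℂ) M).mulVec =
      fixedSet (mtensor (1 : Matrix (ι → ZMod 2) (ι → ZMod 2) ℂ) '' S) := by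
  ext v
  rw [(isIsometry_one.mtensor hM).mem_range_mulVec_iff, conjTranspose_mtensor, mtensor_mul,
    conjTranspose_one, Matrix.mul_one, one_mtensor_mulVec_eq_self_iff]
  simp only [hM.mul_conjTranspose_mulVec_eq_self_iff hMS, fixedSet, Set.forall_mem_image,
    one_mtensor_mulVec_eq_self_iff, Set.mem_ofPred_eq]
  exact ⟨fun h s hs a => h a s hs, fun h a s hs => h hs a⟩

theorem range_mulVec_mtensor_one {μ : Type*} [Fintype μ] [DecidableEq μ]
    {M : Matrix (κ → ZMod 2) (μ → ZMod 2) ℂ} {S : Set (Matrix (κ → ZMod 2) (κ → ZMod 2) ℂ)}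
    (hM : M.IsIsometry) (hMS : Set.range M.mulVec = fixedSet S) :
    Set.range (mtensor M (1 : Matrix (ι → ZMod 2) (ι → ZMod 2) ℂ)).mulVec =
      fixedSet ((mtensor · (1 : Matrix (ι → ZMod 2) (ι → ZMod 2) ℂ)) '' S) := by
  ext v
  rw [(hM.mtensor isIsometry_one).mem_range_mulVec_iff, conjTranspose_mtensor, mtensor_mul,
    conjTranspose_one, Matrix.mul_one, mtensor_one_mulVec_eq_self_iff]
  simp only [hM.mul_conjTranspose_mulVec_eq_self_iff hMS, fixedSet, Set.forall_mem_image,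
    mtensor_one_mulVec_eq_self_iff, Set.mem_ofPred_eq]
  exact ⟨fun h s hs a => h a s hs, fun h a s hs => h hs a⟩

theorem fixedSet_image_reindex (e : (ι → ZMod 2) ≃ (κ → ZMod 2))
    (S : Set (Matrix (ι → ZMod 2) (ι → ZMod 2) ℂ)) :
    fixedSet (reindex e e '' S) = (· ∘ e) ⁻¹' fixedSet S := by
  ext v
  simp only [fixedSet, Set.forall_mem_image, Set.mem_preimage, Set.mem_ofPred_eq, reindex_apply,
    submatrix_mulVec_equiv, Equiv.symm_symm, Equiv.comp_symm_eq]

theorem Matrix.IsIsometry.image_mulVec_fixedSet {α : Type*}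
    {T : Matrix (κ → ZMod 2) (ι → ZMod 2) ℂ}
    (hT : T.IsIsometry) {S : Set α} {R : α → Matrix (ι → ZMod 2) (ι → ZMod 2) ℂ}
    {t : α → Matrix (κ → ZMod 2) (κ → ZMod 2) ℂ} (hRt : ∀ s ∈ S, T * R s = t s * T) :
    T.mulVec '' fixedSet (R '' S) = Set.range T.mulVec ∩ fixedSet (t '' S) := by
  ext v
  simp only [fixedSet, Set.forall_mem_image]
  constructor
  · rintro ⟨w, hw, rfl⟩
    exact ⟨⟨w, rfl⟩, fun s hs => by rw [mulVec_mulVec, ← hRt s hs, ← mulVec_mulVec, hw hs]⟩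
  · rintro ⟨⟨w, rfl⟩, hw⟩
    refine ⟨w, fun s hs => hT.mulVec_injective ?_, rfl⟩
    rw [mulVec_mulVec, hRt s hs, ← mulVec_mulVec, hw hs]

end StabilizerCode

theorem stabilizer_isometry_composition_general
    {A E F G H : Type*}
    [Fintype A] [DecidableEq A] [Fintype E] [DecidableEq E]
    [Fintype F] [DecidableEq F] [Fintype G] [DecidableEq G]
    [Fintype H] [DecidableEq H]
    (n₁ k₁ n₂ k₂ m : ℕ) (hm2 : m ≤ k₂)
    (hcardA : Fintype.card A = k₁) (hcardE : Fintype.card E = n₁ - m)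
    (hcardG : Fintype.card G = k₂ - m)
    (hcardH : Fintype.card H = n₂)
    (M₁ : Matrix ((E ⊕ F) → ZMod 2) (A → ZMod 2) ℂ)
    (M₂ : Matrix (H → ZMod 2) ((F ⊕ G) → ZMod 2) ℂ)
    (hM₁iso : M₁ᴴ * M₁ = 1) (hM₂iso : M₂ᴴ * M₂ = 1)
    (hM₁cliff : ∀ P, IsPauli P → ∃ Q, IsPauli Q ∧ M₁ * P = Q * M₁)
    (hM₂cliff : ∀ P, IsPauli P → ∃ Q, IsPauli Q ∧ M₂ * P = Q * M₂)
    (S₁ : Set (Matrix ((E ⊕ F) → ZMod 2) ((E ⊕ F) → ZMod 2) ℂ))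
    (S₂ : Set (Matrix (H → ZMod 2) (H → ZMod 2) ℂ))
    (hS₁p : ∀ s ∈ S₁, IsPauli s)
    (hS₁fix : Set.range M₁.mulVec = fixedSet S₁)
    (hS₂fix : Set.range M₂.mulVec = fixedSet S₂) :
    -- the composite encoding isometry
    let e : (((E ⊕ F) ⊕ G) → ZMod 2) ≃ ((E ⊕ (F ⊕ G)) → ZMod 2) :=
      (Equiv.sumAssoc E F G).arrowCongr (Equiv.refl (ZMod 2))
    let Cmp : Matrix ((E ⊕ H) → ZMod 2) ((A ⊕ G) → ZMod 2) ℂ :=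
      mtensor (1 : Matrix (E → ZMod 2) (E → ZMod 2) ℂ) M₂ *
        Matrix.reindex e (Equiv.refl (A ⊕ G → ZMod 2))
          (mtensor M₁ (1 : Matrix (G → ZMod 2) (G → ZMod 2) ℂ))
    -- it encodes k₁ + k₂ − m qubits into n₁ − m + n₂ qubits,
    Fintype.card (A ⊕ G) = k₁ + k₂ - m ∧
    Fintype.card (E ⊕ H) = n₁ - m + n₂ ∧
    -- it is a Clifford isometry,
    Cmpᴴ * Cmp = 1 ∧
    (∀ P, IsPauli P → ∃ Q, IsPauli Q ∧ Cmp * P = Q * Cmp) ∧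
    -- and its range is the stabilizer code stabilized by S₂ and M₂(S₁):
    ∃ t : Matrix ((E ⊕ F) → ZMod 2) ((E ⊕ F) → ZMod 2) ℂ →
          Matrix ((E ⊕ H) → ZMod 2) ((E ⊕ H) → ZMod 2) ℂ,
      (∀ s ∈ S₁, IsPauli (t s) ∧
        mtensor (1 : Matrix (E → ZMod 2) (E → ZMod 2) ℂ) M₂ *
            Matrix.reindex e e
              (mtensor s (1 : Matrix (G → ZMod 2) (G → ZMod 2) ℂ)) =
          t s * mtensor (1 : Matrix (E → ZMod 2) (E → ZMod 2) ℂ) M₂) ∧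
      Set.range Cmp.mulVec =
        fixedSet ((fun s₂ => mtensor (1 : Matrix (E → ZMod 2) (E → ZMod 2) ℂ) s₂) '' S₂
          ∪ t '' S₁) := by
  intro e Cmp
  set T := mtensor (1 : Matrix (E → ZMod 2) (E → ZMod 2) ℂ) M₂
  set X := reindex e (Equiv.refl _) (mtensor M₁ (1 : Matrix (G → ZMod 2) (G → ZMod 2) ℂ))
  have hT : T.IsIsometry := isIsometry_one.mtensor hM₂iso
  have hTc : IsClifford T := isClifford_one.mtensor hM₂cliff
  have hX : X.IsIsometry := (IsIsometry.mtensor hM₁iso isIsometry_one).reindex e (Equiv.refl _)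
  have hXc : IsClifford X := (IsClifford.mtensor hM₁cliff isClifford_one).reindex_arrowCongr _
  have hR : ∀ s ∈ S₁, ∃ Q, IsPauli Q ∧
      T * reindex e e (mtensor s (1 : Matrix (G → ZMod 2) (G → ZMod 2) ℂ)) = Q * T :=
    fun s hs => hTc _ (((hS₁p s hs).mtensor isPauli_one).reindex_arrowCongr _)
  choose! t ht using hR
  refine ⟨by simp only [Fintype.card_sum, hcardA, hcardG]; omega,
    by simp only [Fintype.card_sum, hcardE, hcardH], hT.mul hX, hTc.mul hXc, t, ht, ?_⟩
  calc Set.range Cmp.mulVec = T.mulVec '' Set.range X.mulVec := by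
        rw [← Set.range_comp, ← mulVec_mul_eq_comp]
    _ = T.mulVec '' fixedSet
          ((fun s => reindex e e (mtensor s (1 : Matrix (G → ZMod 2) (G → ZMod 2) ℂ))) '' S₁) := by
        rw [range_mulVec_reindex_refl, range_mulVec_mtensor_one hM₁iso hS₁fix,
          ← fixedSet_image_reindex, Set.image_image]
    _ = Set.range T.mulVec ∩ fixedSet (t '' S₁) :=
        hT.image_mulVec_fixedSet fun s hs => (ht s hs).2
    _ = _ := by rw [range_mulVec_one_mtensor hM₂iso hS₂fix, fixedSet_union]

/-- Composing the Clifford encoding isometry `M₁` of an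
`[[n₁,k₁]]` stabilizer code (stabilizer `S₁`, outputs on qubits `E ⊕ F` with
`|F| = m`) with the Clifford encoding isometry `M₂` of an `[[n₂,k₂]]`
stabilizer code (stabilizer `S₂`) applied to the `m` output qubits `F`
together with `k₂ − m` fresh input qubits `G`, yields the Clifford encoding
isometry of an `[[n₁−m+n₂, k₁+k₂−m]]` stabilizer code whose stabilizer group
is generated by `S₂` and `M₂(S₁)` (operators extended by identities as
needed). -/
theorem stabilizer_isometry_composition
    {A E F G H : Type*}
    [Fintype A] [DecidableEq A] [Fintype E] [DecidableEq E]
    [Fintype F] [DecidableEq F] [Fintype G] [DecidableEq G]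
    [Fintype H] [DecidableEq H]
    (n₁ k₁ n₂ k₂ m : ℕ) (hm1 : m ≤ n₁) (hm2 : m ≤ k₂)
    (hcardA : Fintype.card A = k₁) (hcardE : Fintype.card E = n₁ - m)
    (hcardF : Fintype.card F = m) (hcardG : Fintype.card G = k₂ - m)
    (hcardH : Fintype.card H = n₂)
    (M₁ : Matrix ((E ⊕ F) → ZMod 2) (A → ZMod 2) ℂ)
    (M₂ : Matrix (H → ZMod 2) ((F ⊕ G) → ZMod 2) ℂ)
    (hM₁iso : M₁ᴴ * M₁ = 1) (hM₂iso : M₂ᴴ * M₂ = 1)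
    (hM₁cliff : ∀ P, IsPauli P → ∃ Q, IsPauli Q ∧ M₁ * P = Q * M₁)
    (hM₂cliff : ∀ P, IsPauli P → ∃ Q, IsPauli Q ∧ M₂ * P = Q * M₂)
    (S₁ : Set (Matrix ((E ⊕ F) → ZMod 2) ((E ⊕ F) → ZMod 2) ℂ))
    (S₂ : Set (Matrix (H → ZMod 2) (H → ZMod 2) ℂ))
    (hS₁p : ∀ s ∈ S₁, IsPauli s) (hS₂p : ∀ s ∈ S₂, IsPauli s)
    (hS₁comm : ∀ s ∈ S₁, ∀ s' ∈ S₁, s * s' = s' * s)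
    (hS₂comm : ∀ s ∈ S₂, ∀ s' ∈ S₂, s * s' = s' * s)
    (hS₁fix : Set.range M₁.mulVec = fixedSet S₁)
    (hS₂fix : Set.range M₂.mulVec = fixedSet S₂) :
    -- the composite encoding isometry
    let e : (((E ⊕ F) ⊕ G) → ZMod 2) ≃ ((E ⊕ (F ⊕ G)) → ZMod 2) :=
      (Equiv.sumAssoc E F G).arrowCongr (Equiv.refl (ZMod 2))
    let Cmp : Matrix ((E ⊕ H) → ZMod 2) ((A ⊕ G) → ZMod 2) ℂ :=
      mtensor (1 : Matrix (E → ZMod 2) (E → ZMod 2) ℂ) M₂ *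
        Matrix.reindex e (Equiv.refl (A ⊕ G → ZMod 2))
          (mtensor M₁ (1 : Matrix (G → ZMod 2) (G → ZMod 2) ℂ))
    -- it encodes k₁ + k₂ − m qubits into n₁ − m + n₂ qubits,
    Fintype.card (A ⊕ G) = k₁ + k₂ - m ∧
    Fintype.card (E ⊕ H) = n₁ - m + n₂ ∧
    -- it is a Clifford isometry,
    Cmpᴴ * Cmp = 1 ∧
    (∀ P, IsPauli P → ∃ Q, IsPauli Q ∧ Cmp * P = Q * Cmp) ∧
    -- and its range is the stabilizer code stabilized by S₂ and M₂(S₁):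
    ∃ t : Matrix ((E ⊕ F) → ZMod 2) ((E ⊕ F) → ZMod 2) ℂ →
          Matrix ((E ⊕ H) → ZMod 2) ((E ⊕ H) → ZMod 2) ℂ,
      (∀ s ∈ S₁, IsPauli (t s) ∧
        mtensor (1 : Matrix (E → ZMod 2) (E → ZMod 2) ℂ) M₂ *
            Matrix.reindex e e
              (mtensor s (1 : Matrix (G → ZMod 2) (G → ZMod 2) ℂ)) =
          t s * mtensor (1 : Matrix (E → ZMod 2) (E → ZMod 2) ℂ) M₂) ∧
      Set.range Cmp.mulVec =
        fixedSet ((fun s₂ => mtensor (1 : Matrix (E → ZMod 2) (E → ZMod 2) ℂ) s₂) '' S₂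
          ∪ t '' S₁) :=
  stabilizer_isometry_composition_general n₁ k₁ n₂ k₂ m hm2 hcardA hcardE hcardG hcardH M₁ M₂ hM₁iso
    hM₂iso hM₁cliff hM₂cliff S₁ S₂ hS₁p hS₁fix hS₂fix
end
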